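/- arXiv:1703.10912 — 9 statements merged into one kernel-verified Lean document; each statement's English description precedes it below -/
import Mathlib

section
/- Let X be a set and let (V_i)_{i∈I} be an injective family of nonempty subsets of X which is closed under pairwise intersections up to ∅, i.e., for all i, j ∈ I either V_i ∩ V_j = ∅ or V_i ∩ V_j = V_k for some k ∈ I. Then the family (V_i)_{i∈I} is independent if and only if the indicator functions (1_{V_i})_{i∈I}, regarded as elements of the complex vector space of functions X → ℂ, are linearly independent. -/
/-!
Linear independence ⇒ independence: if `V i₀ = ⋃_{i ∈ F} V i` with `i₀ ∉ F`, then all `V i`,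
`i ∈ F`, lie in the π-system of members of the family strictly contained in `V i₀`. The span of
the indicators of a π-system is closed under pointwise products, and
`1_{A ∪ B} = 1_A + 1_B - 1_A 1_B`, so `1_{V i₀}` lies in the span of the other indicators.

Independence ⇒ linear independence: in a finite subfamily, a maximal member `A` has a point lying
in no other member, since otherwise `A` is the union of the nonempty intersections `A ∩ B`, which
are again members. Evaluating a linear relation at that point kills its coefficient at `A`.
-/

open Set

section IndicatorSpan

variable {X : Type*} (R : Type*) [CommRing R]

def indicatorSpan (C : Set (Set X)) : Submodule R (X → R) :=
  Submodule.span R ((fun A => A.indicator 1) '' C)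

variable {R} {C : Set (Set X)}

lemma IsPiSystem.mul_mem_indicatorSpan (hC : IsPiSystem C) {f g : X → R}
    (hf : f ∈ indicatorSpan R C) (hg : g ∈ indicatorSpan R C) : f * g ∈ indicatorSpan R C := by
  refine (?_ : indicatorSpan R C * indicatorSpan R C ≤ _) (Submodule.mul_mem_mul hf hg)
  rw [indicatorSpan, Submodule.span_mul_span, Submodule.span_le]
  rintro _ ⟨_, ⟨A, hA, rfl⟩, _, ⟨B, hB, rfl⟩, rfl⟩
  simp only [← inter_indicator_one]
  rcases (A ∩ B).eq_empty_or_nonempty with hAB | hAB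
  · rw [hAB, indicator_empty]
    exact zero_mem _
  · exact Submodule.subset_span ⟨_, hC A hA B hB hAB, rfl⟩

lemma IsPiSystem.indicator_sUnion_mem_indicatorSpan (hC : IsPiSystem C) (𝒢 : Finset (Set X))
    (h𝒢 : ↑𝒢 ⊆ C) : (⋃₀ ↑𝒢).indicator (1 : X → R) ∈ indicatorSpan R C := by
  classical
  induction 𝒢 using Finset.induction_on with
  | empty =>
    rw [Finset.coe_empty, sUnion_empty, indicator_empty]
    exact zero_mem _
  | insert A 𝒢 _ ih =>
    rw [Finset.coe_insert, insert_subset_iff] at h𝒢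
    have hA : A.indicator (1 : X → R) ∈ indicatorSpan R C :=
      Submodule.subset_span ⟨A, h𝒢.1, rfl⟩
    have hunion := indicator_union_add_inter (1 : X → R) A (⋃₀ ↑𝒢)
    rw [← eq_sub_iff_add_eq, inter_indicator_one] at hunion
    rw [Finset.coe_insert, sUnion_insert, hunion]
    exact sub_mem (add_mem hA (ih h𝒢.2)) (hC.mul_mem_indicatorSpan hA (ih h𝒢.2))

end IndicatorSpan

lemma IsPiSystem.inter_of_isLowerSet {X : Type*} {C D : Set (Set X)} (hC : IsPiSystem C)
    (hD : IsLowerSet D) : IsPiSystem (C ∩ D) :=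
  fun _ hA _ hB hAB => ⟨hC _ hA.1 _ hB.1 hAB, hD inter_subset_left hA.2⟩

lemma IsPiSystem.exists_mem_forall_notMem {X : Type*} {C : Set (Set X)} (hC : IsPiSystem C)
    (hind : ∀ A ∈ C, ∀ 𝒢 : Finset (Set X), ↑𝒢 ⊆ C → A = ⋃₀ ↑𝒢 → A ∈ 𝒢)
    (𝒮 : Finset (Set X)) (h𝒮 : ↑𝒮 ⊆ C) (hne : 𝒮.Nonempty) :
    ∃ A ∈ 𝒮, ∃ x ∈ A, ∀ B ∈ 𝒮, B ≠ A → x ∉ B := by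
  classical
  obtain ⟨A, hAmax⟩ := 𝒮.exists_maximal hne
  refine ⟨A, hAmax.prop, ?_⟩
  by_contra! hcover
  set 𝒢 := ((𝒮.erase A).image (A ∩ ·)).filter Set.Nonempty
  have h𝒢C : ↑𝒢 ⊆ C := by
    intro G hG
    obtain ⟨hG, hGne⟩ := Finset.mem_filter.1 hG
    obtain ⟨B, hB, rfl⟩ := Finset.mem_image.1 hG
    exact hC A (h𝒮 hAmax.prop) B (h𝒮 (Finset.mem_of_mem_erase hB)) hGne
  have hA𝒢 : A = ⋃₀ ↑𝒢 := by
    refine Subset.antisymm (fun x hx => ?_) (sUnion_subset fun G hG => ?_)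
    · obtain ⟨B, hB, hBA, hxB⟩ := hcover x hx
      refine ⟨A ∩ B, Finset.mem_filter.2 ⟨?_, x, hx, hxB⟩, hx, hxB⟩
      exact Finset.mem_image_of_mem _ (Finset.mem_erase.2 ⟨hBA, hB⟩)
    · obtain ⟨B, -, rfl⟩ := Finset.mem_image.1 (Finset.mem_filter.1 hG).1
      exact inter_subset_left
  have hA𝒢' := hind A (h𝒮 hAmax.prop) 𝒢 h𝒢C hA𝒢
  obtain ⟨B, hB, hAB⟩ := Finset.mem_image.1 (Finset.mem_filter.1 hA𝒢').1
  exact Finset.ne_of_mem_erase hB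
    (hAmax.eq_of_subset (Finset.mem_of_mem_erase hB) (inter_eq_left.1 hAB)).symm

lemma linearIndependent_indicator_of_exists_mem_forall_notMem {X ι R : Type*} [Ring R]
    {V : ι → Set X}
    (h : ∀ s : Finset ι, s.Nonempty → ∃ i ∈ s, ∃ x ∈ V i, ∀ j ∈ s, j ≠ i → x ∉ V j) :
    LinearIndependent R (fun i => (V i).indicator (1 : X → R)) := by
  classical
  rw [linearIndependent_iff']
  intro s g hsum i hi
  by_contra hgi
  obtain ⟨i₁, hi₁, x, hx, hpriv⟩ := h (s.filter (g · ≠ 0)) ⟨i, Finset.mem_filter.2 ⟨hi, hgi⟩⟩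
  rw [Finset.mem_filter] at hi₁
  have hsum_x := congrFun hsum x
  rw [Finset.sum_apply, Finset.sum_eq_single i₁ ?_ (fun h => (h hi₁.1).elim)] at hsum_x
  · exact hi₁.2 (by simpa [indicator_of_mem hx] using hsum_x)
  · intro j hj hji
    by_cases hgj : g j = 0
    · simp [hgj]
    · simp [indicator_of_notMem (hpriv j (Finset.mem_filter.2 ⟨hj, hgj⟩) hji)]

def IsUnionIndependent {X ι : Type*} (V : ι → Set X) : Prop :=
  ∀ (F : Finset ι) (i₀ : ι), V i₀ = ⋃ i ∈ F, V i → i₀ ∈ F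

section IndexedFamily

variable {X ι R : Type*} {V : ι → Set X}

lemma IsPiSystem.linearIndependent_indicator_of_isUnionIndependent [Ring R]
    (hpi : IsPiSystem (range V)) (hinj : Function.Injective V) (hind : IsUnionIndependent V) :
    LinearIndependent R (fun i => (V i).indicator (1 : X → R)) := by
  classical
  have hind' : ∀ A ∈ range V, ∀ 𝒢 : Finset (Set X), ↑𝒢 ⊆ range V → A = ⋃₀ ↑𝒢 → A ∈ 𝒢 := by
    rintro _ ⟨i₀, rfl⟩ 𝒢 h𝒢 hU
    obtain ⟨F, -, rfl⟩ := Finset.subset_set_image_iff.1 (image_univ (f := V) ▸ h𝒢)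
    rw [Finset.coe_image, sUnion_image] at hU
    exact Finset.mem_image_of_mem V (hind F i₀ hU)
  refine linearIndependent_indicator_of_exists_mem_forall_notMem fun s hs => ?_
  obtain ⟨_, hA, x, hx, hpriv⟩ :=
    hpi.exists_mem_forall_notMem hind' (s.image V) (by simp) (hs.image V)
  obtain ⟨i, hi, rfl⟩ := Finset.mem_image.1 hA
  exact ⟨i, hi, x, hx, fun j hj hji => hpriv _ (Finset.mem_image_of_mem V hj) (hinj.ne hji)⟩

lemma IsPiSystem.isUnionIndependent_of_linearIndependent_indicator [CommRing R] [Nontrivial R]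
    (hpi : IsPiSystem (range V)) (hinj : Function.Injective V)
    (hli : LinearIndependent R (fun i => (V i).indicator (1 : X → R))) :
    IsUnionIndependent V := by
  classical
  intro F i₀ hU
  by_contra hi₀
  have hF : ↑(F.image V) ⊆ range V ∩ Iio (V i₀) := by
    rintro _ hA
    obtain ⟨i, hi, rfl⟩ := Finset.mem_image.1 hA
    have hsub : V i ⊆ V i₀ := hU ▸ subset_biUnion_of_mem (u := V) hi
    exact ⟨mem_range_self i, hsub.ssubset_of_ne (hinj.ne (ne_of_mem_of_not_mem hi hi₀))⟩
  have hmem := (hpi.inter_of_isLowerSet (isLowerSet_Iio _)).indicator_sUnion_mem_indicatorSpan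
    (R := R) (F.image V) hF
  rw [Finset.coe_image, sUnion_image, Finset.set_biUnion_coe, ← hU] at hmem
  refine hli.notMem_span_image (s := {i₀}ᶜ) (notMem_compl_iff.2 rfl) (Submodule.span_mono ?_ hmem)
  rintro _ ⟨_, ⟨⟨k, rfl⟩, hk⟩, rfl⟩
  exact ⟨k, fun h => hk.ne (congrArg V h), rfl⟩

end IndexedFamily

theorem stmt3_general {X I : Type*} (V : I → Set X)
    (hinj : Function.Injective V)
    (hcap : ∀ i j : I, V i ∩ V j = ∅ ∨ ∃ k, V i ∩ V j = V k) :
    (∀ (F : Finset I) (i₀ : I), V i₀ = ⋃ i ∈ F, V i → i₀ ∈ F) ↔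
      LinearIndependent ℂ (fun i : I => (V i).indicator (fun _ => (1 : ℂ))) := by
  have hpi : IsPiSystem (range V) := by
    rintro _ ⟨i, rfl⟩ _ ⟨j, rfl⟩ hij
    obtain ⟨k, hk⟩ := (hcap i j).resolve_left hij.ne_empty
    exact ⟨k, hk.symm⟩
  exact ⟨hpi.linearIndependent_indicator_of_isUnionIndependent hinj,
    hpi.isUnionIndependent_of_linearIndependent_indicator hinj⟩

/-- For an injective family `(V i)` of nonempty subsets of `X` that is
closed under pairwise intersections up to `∅`, the family is independent (i.e.
`V i₀ = ⋃_{i ∈ F} V i` forces `i₀ ∈ F` for finite `F`) if and only if the indicator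
functions `1_{V i} : X → ℂ` are linearly independent. -/
theorem stmt3 {X I : Type*} (V : I → Set X)
    (hne : ∀ i, (V i).Nonempty) (hinj : Function.Injective V)
    (hcap : ∀ i j : I, V i ∩ V j = ∅ ∨ ∃ k, V i ∩ V j = V k) :
    (∀ (F : Finset I) (i₀ : I), V i₀ = ⋃ i ∈ F, V i → i₀ ∈ F) ↔
      LinearIndependent ℂ (fun i : I => (V i).indicator (fun _ => (1 : ℂ))) :=
  stmt3_general V hinj hcap
end

section
/- Let X be a set and let (V_i)_{i∈J} be a finite injective family of nonempty subsets of X which is independent and closed under pairwise intersections up to ∅ (for all i, j ∈ J either V_i ∩ V_j = ∅ or V_i ∩ V_j = V_k for some k ∈ J). For each i ∈ J define V′_i := V_i \ ⋃{V_j : j ∈ J, V_j ⊊ V_i}. Then: (a) each V′_i is nonempty; (b) the sets V′_i, i ∈ J, are pairwise disjoint; (c) for every j ∈ J one has V_j = ⋃{V′_i : i ∈ J, V_i ⊆ V_j}; consequently the J × J integer matrix Γ = (γ_{ij}) with γ_{ij} = 1 if V_i ⊆ V_j and γ_{ij} = 0 otherwise satisfies 1_{V_j} = ∑_{i∈J}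 γ_{ij} 1_{V′_i}, and Γ is unipotent (a permutation of the index set makes it upper triangular with 1's on the diagonal), hence invertible over ℤ. -/
/-!
A point `x ∈ V j` lies in `V′ i` whenever `V i` is minimal among the members of the family
that contain `x` and lie in `V j`; this gives the covering (c). If `x` lies in `V′ i` and in
`V′ j`, then the member `V i ∩ V j` contains `x`, so it equals both `V i` and `V j`; this gives
disjointness (b). Independence forbids `V i` from being the union of its proper submembers,
which is (a). Ordering `J` along a linear extension of inclusion makes `Γ` upper unitriangular.
-/

open Function

section UncoveredPart

variable {X J : Type*} {V : J → Set X} {i j : J} {x : X}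

/-- The paper's `V′ i`. -/
def uncoveredPart (V : J → Set X) (i : J) : Set X :=
  V i \ ⋃ (j : J) (_ : V j ⊂ V i), V j

theorem mem_uncoveredPart : x ∈ uncoveredPart V i ↔ x ∈ V i ∧ ∀ j, V j ⊂ V i → x ∉ V j := by
  simp [uncoveredPart]

theorem uncoveredPart_subset (V : J → Set X) (i : J) : uncoveredPart V i ⊆ V i :=
  Set.sdiff_subset

theorem uncoveredPart_nonempty [Finite J]
    (hindep : ∀ (F : Finset J) (i₀ : J), V i₀ = ⋃ i ∈ F, V i → i₀ ∈ F) (i : J) :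
    (uncoveredPart V i).Nonempty := by
  classical
  have := Fintype.ofFinite J
  rw [Set.nonempty_iff_ne_empty]
  intro h
  have hcover : V i = ⋃ j ∈ Finset.univ.filter (fun j => V j ⊂ V i), V j := by
    apply subset_antisymm
    · simpa using Set.sdiff_eq_empty.1 h
    · simpa using fun j hj => hj.subset
  simpa using hindep _ i hcover

theorem eq_of_subset_of_mem_uncoveredPart {k : J} (hki : V k ⊆ V i) (hxk : x ∈ V k)
    (hxi : x ∈ uncoveredPart V i) : V k = V i :=
  by_contra fun hne => (mem_uncoveredPart.1 hxi).2 k (hki.ssubset_of_ne hne) hxk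

theorem eq_of_mem_uncoveredPart (hcap : ∀ i j : J, V i ∩ V j = ∅ ∨ ∃ k, V i ∩ V j = V k)
    (hi : x ∈ uncoveredPart V i) (hj : x ∈ uncoveredPart V j) : V i = V j := by
  have hxij : x ∈ V i ∩ V j := ⟨uncoveredPart_subset V i hi, uncoveredPart_subset V j hj⟩
  obtain hempty | ⟨k, hk⟩ := hcap i j
  · exact (Set.eq_empty_iff_forall_notMem.1 hempty x hxij).elim
  have hxk : x ∈ V k := hk ▸ hxij
  rw [← eq_of_subset_of_mem_uncoveredPart (hk ▸ Set.inter_subset_left) hxk hi,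
    ← eq_of_subset_of_mem_uncoveredPart (hk ▸ Set.inter_subset_right) hxk hj]

theorem pairwise_disjoint_uncoveredPart (hinj : Injective V)
    (hcap : ∀ i j : J, V i ∩ V j = ∅ ∨ ∃ k, V i ∩ V j = V k) :
    Pairwise (Disjoint on uncoveredPart V) := fun _ _ hij =>
  Set.disjoint_left.2 fun _ hi hj => hij (hinj (eq_of_mem_uncoveredPart hcap hi hj))

theorem exists_mem_uncoveredPart [Finite J] (hx : x ∈ V j) :
    ∃ i, V i ⊆ V j ∧ x ∈ uncoveredPart V i := by
  obtain ⟨i, ⟨hxi, hij⟩, hmin⟩ := (Set.toFinite {i | x ∈ V i ∧ V i ⊆ V j}).exists_minimalFor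
    V _ ⟨j, hx, subset_rfl⟩
  refine ⟨i, hij, mem_uncoveredPart.2 ⟨hxi, fun k hki hxk => ?_⟩⟩
  exact hki.not_subset (hmin ⟨hxk, hki.subset.trans hij⟩ hki.subset)

theorem biUnion_uncoveredPart [Finite J] (V : J → Set X) (j : J) :
    V j = ⋃ (i : J) (_ : V i ⊆ V j), uncoveredPart V i := by
  refine subset_antisymm (fun x hx => ?_) (Set.iUnion₂_subset fun i hij =>
    (uncoveredPart_subset V i).trans hij)
  obtain ⟨i, hij, hxi⟩ := exists_mem_uncoveredPart hx
  exact Set.mem_biUnion hij hxi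

theorem indicator_eq_sum_indicator_uncoveredPart [Fintype J]
    (hdisj : Pairwise (Disjoint on uncoveredPart V)) {Γ : Matrix J J ℤ}
    (hΓ1 : ∀ i j, V i ⊆ V j → Γ i j = 1) (hΓ0 : ∀ i j, ¬ V i ⊆ V j → Γ i j = 0) (j : J) (x : X) :
    (V j).indicator (fun _ => (1 : ℤ)) x =
      ∑ i : J, Γ i j * (uncoveredPart V i).indicator (fun _ => (1 : ℤ)) x := by
  classical
  have hcover : V j = ⋃ i ∈ Finset.univ.filter (fun i => V i ⊆ V j), uncoveredPart V i := by
    simpa using biUnion_uncoveredPart V j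
  rw [hcover, Finset.indicator_biUnion _ _ (hdisj.set_pairwise _)]
  dsimp only
  rw [Finset.sum_filter]
  refine Finset.sum_congr rfl fun i _ => ?_
  by_cases hij : V i ⊆ V j
  · simp [hij, hΓ1 i j hij]
  · simp [hij, hΓ0 i j hij]

end UncoveredPart

theorem exists_equiv_fin_monotone {J : Type*} [Fintype J] [PartialOrder J] :
    ∃ e : J ≃ Fin (Fintype.card J), Monotone e := by
  let : Fintype (LinearExtension J) := ‹Fintype J›
  let e := (monoEquivOfFin (LinearExtension J) rfl).symm
  exact ⟨e.toEquiv, fun i j hij => e.monotone (toLinearExtension.monotone hij)⟩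

theorem Matrix.det_eq_prod_diag_of_blockTriangular_equiv {m n R : Type*} [CommRing R]
    [Fintype m] [DecidableEq m] [Fintype n] [DecidableEq n] [LinearOrder n]
    {M : Matrix m m R} (e : m ≃ n) (hM : M.BlockTriangular e) : M.det = ∏ i, M i i := by
  have hupper : (reindex e e M).IsUpperTriangular := blockTriangular_reindex_iff.2 hM
  rw [← det_reindex_self e, det_of_isUpperTriangular hupper]
  exact Fintype.prod_equiv e.symm _ _ fun _ => rfl

theorem stmt4_general {X J : Type*} [Fintype J] [DecidableEq J] (V : J → Set X)
    (hinj : Function.Injective V)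
    (hcap : ∀ i j : J, V i ∩ V j = ∅ ∨ ∃ k, V i ∩ V j = V k)
    (hindep : ∀ (F : Finset J) (i₀ : J), V i₀ = ⋃ i ∈ F, V i → i₀ ∈ F)
    (V' : J → Set X)
    (hV' : ∀ i, V' i = V i \ ⋃ (j : J) (_ : V j ⊂ V i), V j)
    (Γ : Matrix J J ℤ)
    (hΓ1 : ∀ i j, V i ⊆ V j → Γ i j = 1)
    (hΓ0 : ∀ i j, ¬ V i ⊆ V j → Γ i j = 0) :
    (∀ i, (V' i).Nonempty) ∧
    (∀ i j, i ≠ j → V' i ∩ V' j = ∅) ∧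
    (∀ j, V j = ⋃ (i : J) (_ : V i ⊆ V j), V' i) ∧
    (∀ (j : J) (x : X), (V j).indicator (fun _ => (1 : ℤ)) x =
      ∑ i : J, Γ i j * (V' i).indicator (fun _ => (1 : ℤ)) x) ∧
    (∃ e : J ≃ Fin (Fintype.card J),
      (∀ i, Γ i i = 1) ∧ ∀ i j, e j < e i → Γ i j = 0) ∧
    IsUnit Γ := by
  obtain rfl : V' = uncoveredPart V := funext hV'
  have hdisj := pairwise_disjoint_uncoveredPart hinj hcap
  have hdiag : ∀ i, Γ i i = 1 := fun i => hΓ1 i i subset_rfl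
  let := PartialOrder.lift V hinj
  obtain ⟨e, he⟩ := exists_equiv_fin_monotone (J := J)
  have htri : Γ.BlockTriangular e := fun i j hji =>
    hΓ0 i j fun hij => (he hij).not_gt hji
  refine ⟨uncoveredPart_nonempty hindep, fun i j hij => (hdisj hij).inter_eq,
    biUnion_uncoveredPart V, indicator_eq_sum_indicator_uncoveredPart hdisj hΓ1 hΓ0,
    ⟨e, hdiag, fun i j => @htri i j⟩, ?_⟩
  rw [Matrix.isUnit_iff_isUnit_det, Matrix.det_eq_prod_diag_of_blockTriangular_equiv e htri]
  simp [hdiag]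

/-- Let `(V i)_{i ∈ J}` be a finite injective independent family of nonempty
subsets of `X`, closed under pairwise intersections up to `∅`. With
`V′ i = V i \ ⋃ {V j : V j ⊊ V i}` and the integer matrix `Γ i j = if V i ⊆ V j then 1 else 0`:
(a) each `V′ i` is nonempty; (b) the `V′ i` are pairwise disjoint;
(c) `V j = ⋃ {V′ i : V i ⊆ V j}`, and `1_{V j} = ∑ i, Γ i j • 1_{V′ i}`;
moreover `Γ` is unipotent (after a reordering of `J` it is upper triangular with `1`s on
the diagonal) and invertible over `ℤ`. -/
theorem stmt4 {X J : Type*} [Fintype J] [DecidableEq J] (V : J → Set X)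
    (hne : ∀ i, (V i).Nonempty) (hinj : Function.Injective V)
    (hcap : ∀ i j : J, V i ∩ V j = ∅ ∨ ∃ k, V i ∩ V j = V k)
    (hindep : ∀ (F : Finset J) (i₀ : J), V i₀ = ⋃ i ∈ F, V i → i₀ ∈ F)
    (V' : J → Set X)
    (hV' : ∀ i, V' i = V i \ ⋃ (j : J) (_ : V j ⊂ V i), V j)
    (Γ : Matrix J J ℤ)
    (hΓ1 : ∀ i j, V i ⊆ V j → Γ i j = 1)
    (hΓ0 : ∀ i j, ¬ V i ⊆ V j → Γ i j = 0) :
    (∀ i, (V' i).Nonempty) ∧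
    (∀ i j, i ≠ j → V' i ∩ V' j = ∅) ∧
    (∀ j, V j = ⋃ (i : J) (_ : V i ⊆ V j), V' i) ∧
    (∀ (j : J) (x : X), (V j).indicator (fun _ => (1 : ℤ)) x =
      ∑ i : J, Γ i j * (V' i).indicator (fun _ => (1 : ℤ)) x) ∧
    (∃ e : J ≃ Fin (Fintype.card J),
      (∀ i, Γ i i = 1) ∧ ∀ i j, e j < e i → Γ i j = 0) ∧
    IsUnit Γ :=
  stmt4_general V hinj hcap hindep V' hV' Γ hΓ1 hΓ0
end

section
/- Let G be a countable discrete group acting by homeomorphisms on a totally disconnected locally compact Hausdorff space Ω such that the action is minimal, i.e., for every nonempty open subset U ⊆ Ω one has Ω = ⋃_{g∈G} gU, and suppose there exists a nonzero G-invariant regular Borel measure on Ω which is finite on compact sets. Then Ω admits a G-invariant regular basis for its compact open subsets if and only if Ω carries the discrete topology. -/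
/-! Let `𝒱` be an invariant regular basis. By minimality, a compact member `A` is covered by
finitely many translates `g • B` of any member `B`; the nonempty pieces `A ∩ g • B` lie in `𝒱`, so
independence forces `A ⊆ g • B` for one `g`. Hence all members have the same (finite, invariant)
measure, and since nonempty open sets have positive measure, `𝒱` is an antichain; closure under
intersections then makes its members pairwise disjoint. For a disjoint family, the unions of
members form a lattice closed under differences, so every compact open set is a union of members.
A member containing `x` therefore has no proper compact open neighbourhood of `x`, which in a
zero-dimensional space means it is `{x}`: the space is discrete. Conversely the singletons of a
discrete space form an invariant regular basis. -/

open Pointwise MeasureTheory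

/-- A family `𝒱` of subsets of `Ω` generates the collection of all compact open subsets
of `Ω` if every collection of subsets containing `𝒱` and closed under (binary)
intersections, unions and set differences contains every compact open subset of `Ω`. -/
def GeneratesCompactOpens {Ω : Type*} [TopologicalSpace Ω] (𝒱 : Set (Set Ω)) : Prop :=
  ∀ 𝒰 : Set (Set Ω), 𝒱 ⊆ 𝒰 →
    (∀ U ∈ 𝒰, ∀ W ∈ 𝒰, U ∩ W ∈ 𝒰) →
    (∀ U ∈ 𝒰, ∀ W ∈ 𝒰, U ∪ W ∈ 𝒰) →
    (∀ U ∈ 𝒰, ∀ W ∈ 𝒰, U \ W ∈ 𝒰) →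
    ∀ U : Set Ω, IsCompact U → IsOpen U → U ∈ 𝒰

/-- A family of sets is independent if a member which is a finite union of members
already occurs among them: `V₀ = ⋃_{V ∈ F} V` with `F` a finite subfamily forces
`V₀ ∈ F`. -/
def IndependentFamilyOfSets {X : Type*} (𝒱 : Set (Set X)) : Prop :=
  ∀ F : Finset (Set X), ↑F ⊆ 𝒱 → ∀ V₀ ∈ 𝒱, V₀ = ⋃ V ∈ F, V → V₀ ∈ F

/-- A regular basis for the compact open subsets of `Ω`: an independent family of
nonempty compact open subsets, closed under pairwise intersections up to `∅`, which
generates the collection of all compact open subsets of `Ω`. -/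
def IsRegularBasis {Ω : Type*} [TopologicalSpace Ω] (𝒱 : Set (Set Ω)) : Prop :=
  (∀ V ∈ 𝒱, V.Nonempty ∧ IsCompact V ∧ IsOpen V) ∧
  IndependentFamilyOfSets 𝒱 ∧
  (∀ V ∈ 𝒱, ∀ W ∈ 𝒱, V ∩ W = ∅ ∨ V ∩ W ∈ 𝒱) ∧
  GeneratesCompactOpens 𝒱

open Set

theorem exists_isCompact_isOpen_mem_subset {X : Type*} [TopologicalSpace X]
    [LocallyCompactSpace X] [T2Space X] [TotallyDisconnectedSpace X] {U : Set X} {x : X}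
    (hU : IsOpen U) (hx : x ∈ U) : ∃ K, IsCompact K ∧ IsOpen K ∧ x ∈ K ∧ K ⊆ U := by
  obtain ⟨L, hL, hxL, hLU⟩ := exists_compact_subset hU hx
  obtain ⟨K, hK, hxK, hKL⟩ :=
    loc_compact_Haus_tot_disc_of_zero_dim.mem_nhds_iff.mp (isOpen_interior.mem_nhds hxL)
  exact ⟨K, hL.of_isClosed_subset hK.1 (hKL.trans interior_subset), hK.2, hxK,
    hKL.trans (interior_subset.trans hLU)⟩

theorem MulAction.isMinimal_of_iUnion_smul_eq_univ {G X : Type*} [Group G] [TopologicalSpace X]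
    [MulAction G X] (h : ∀ U : Set X, IsOpen U → U.Nonempty → ⋃ g : G, g • U = univ) :
    MulAction.IsMinimal G X := by
  refine ⟨fun x => dense_iff_inter_open.2 fun U hU hne => ?_⟩
  obtain ⟨g, hg⟩ := mem_iUnion.1 (h U hU hne ▸ mem_univ x)
  exact ⟨g⁻¹ • x, mem_smul_set_iff_inv_smul_mem.1 hg, mem_orbit x g⁻¹⟩

theorem IndependentFamilyOfSets.exists_subset_of_subset_biUnion {X ι : Type*}
    {𝒱 : Set (Set X)} (hind : IndependentFamilyOfSets 𝒱)
    (hinter : ∀ V ∈ 𝒱, ∀ W ∈ 𝒱, V ∩ W = ∅ ∨ V ∩ W ∈ 𝒱) {A : Set X} (hA : A ∈ 𝒱)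
    {T : Finset ι} {W : ι → Set X} (hW : ∀ i ∈ T, W i ∈ 𝒱) (hcov : A ⊆ ⋃ i ∈ T, W i) :
    ∃ i ∈ T, A ⊆ W i := by
  classical
  set F := (T.image fun i => A ∩ W i).filter (· ≠ ∅)
  have hF : ↑F ⊆ 𝒱 := by
    intro V hV
    obtain ⟨hV, hne⟩ := Finset.mem_filter.1 hV
    obtain ⟨i, hi, rfl⟩ := Finset.mem_image.1 hV
    exact (hinter A hA (W i) (hW i hi)).resolve_left hne
  have hAF : A = ⋃ V ∈ F, V := by
    refine Subset.antisymm (fun x hx => ?_) ?_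
    · obtain ⟨i, hi, hxi⟩ := mem_iUnion₂.1 (hcov hx)
      refine mem_biUnion (Finset.mem_filter.2 ⟨Finset.mem_image_of_mem _ hi, ?_⟩) ⟨hx, hxi⟩
      exact nonempty_iff_ne_empty.1 ⟨x, hx, hxi⟩
    · refine iUnion₂_subset fun V hV => ?_
      obtain ⟨i, -, rfl⟩ := Finset.mem_image.1 (Finset.mem_filter.1 hV).1
      exact inter_subset_left
  obtain ⟨i, hi, hAi⟩ := Finset.mem_image.1 (Finset.mem_filter.1 (hind F hF A hA hAF)).1
  exact ⟨i, hi, hAi ▸ inter_subset_right⟩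

theorem GeneratesCompactOpens.exists_mem_subset_of_pairwiseDisjoint {Ω : Type*}
    [TopologicalSpace Ω] {𝒱 : Set (Set Ω)} (hgen : GeneratesCompactOpens 𝒱)
    (hdisj : 𝒱.PairwiseDisjoint id) {K : Set Ω} (hK : IsCompact K) (hKo : IsOpen K) :
    ∀ x ∈ K, ∃ A ∈ 𝒱, x ∈ A ∧ A ⊆ K := by
  refine hgen {U | ∀ x ∈ U, ∃ A ∈ 𝒱, x ∈ A ∧ A ⊆ U} ?_ ?_ ?_ ?_ K hK hKo
  · exact fun A hA x hx => ⟨A, hA, hx, subset_rfl⟩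
  · intro U hU W hW x ⟨hxU, hxW⟩
    obtain ⟨A, hA, hxA, hAU⟩ := hU x hxU
    obtain ⟨B, hB, hxB, hBW⟩ := hW x hxW
    obtain rfl := hdisj.elim_set hA hB x hxA hxB
    exact ⟨A, hA, hxA, subset_inter hAU hBW⟩
  · rintro U hU W hW x (hx | hx)
    · obtain ⟨A, hA, hxA, hAU⟩ := hU x hx
      exact ⟨A, hA, hxA, hAU.trans subset_union_left⟩
    · obtain ⟨A, hA, hxA, hAW⟩ := hW x hx
      exact ⟨A, hA, hxA, hAW.trans subset_union_right⟩
  · intro U hU W hW x ⟨hxU, hxW⟩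
    obtain ⟨A, hA, hxA, hAU⟩ := hU x hxU
    refine ⟨A, hA, hxA, fun y hyA => ⟨hAU hyA, fun hyW => hxW ?_⟩⟩
    obtain ⟨B, hB, hyB, hBW⟩ := hW y hyW
    obtain rfl := hdisj.elim_set hA hB y hyA hyB
    exact hBW hxA

theorem discreteTopology_of_isAntichain_of_forall_mem_subset {Ω : Type*} [TopologicalSpace Ω]
    [LocallyCompactSpace Ω] [T2Space Ω] [TotallyDisconnectedSpace Ω] {𝒱 : Set (Set Ω)}
    (hopen : ∀ A ∈ 𝒱, IsOpen A) (hanti : IsAntichain (· ⊆ ·) 𝒱)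
    (hbase : ∀ K, IsCompact K → IsOpen K → ∀ x ∈ K, ∃ A ∈ 𝒱, x ∈ A ∧ A ⊆ K) :
    DiscreteTopology Ω := by
  refine discreteTopology_iff_isOpen_singleton.2 fun x => ?_
  obtain ⟨K, hK, hKo, hxK, -⟩ := exists_isCompact_isOpen_mem_subset isOpen_univ (mem_univ x)
  obtain ⟨A, hA, hxA, -⟩ := hbase K hK hKo x hxK
  suffices A = {x} from this ▸ hopen A hA
  refine eq_singleton_iff_unique_mem.2 ⟨hxA, fun y hyA => by_contra fun hyx => ?_⟩
  obtain ⟨L, hL, hLo, hxL, hLA⟩ :=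
    exists_isCompact_isOpen_mem_subset ((hopen A hA).sdiff isClosed_singleton)
      (show x ∈ A \ {y} from ⟨hxA, Ne.symm hyx⟩)
  obtain ⟨B, hB, hxB, hBL⟩ := hbase L hL hLo x hxL
  obtain rfl := hanti.eq hB hA (hBL.trans (hLA.trans sdiff_subset))
  exact (hLA (hBL hyA)).2 rfl

namespace IsRegularBasis

variable {G Ω : Type*} [Group G] [TopologicalSpace Ω] [MulAction G Ω] {𝒱 : Set (Set Ω)}

theorem exists_subset_smul [ContinuousConstSMul G Ω] [MulAction.IsMinimal G Ω]
    (h𝒱 : IsRegularBasis 𝒱) (hG : ∀ g : G, ∀ V ∈ 𝒱, g • V ∈ 𝒱) {A B : Set Ω}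
    (hA : A ∈ 𝒱) (hB : B ∈ 𝒱) : ∃ g : G, A ⊆ g • B := by
  obtain ⟨T, hT⟩ := (h𝒱.1 A hA).2.1.exists_finite_cover_smul G (h𝒱.1 B hB).2.2 (h𝒱.1 B hB).1
  obtain ⟨g, -, hg⟩ := h𝒱.2.1.exists_subset_of_subset_biUnion h𝒱.2.2.1 hA
    (fun g _ => hG g B hB) hT
  exact ⟨g, hg⟩

theorem isAntichain [T2Space Ω] [ContinuousConstSMul G Ω] [MulAction.IsMinimal G Ω]
    [MeasurableSpace Ω] [BorelSpace Ω] (μ : Measure Ω) [μ.IsOpenPosMeasure]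
    [IsFiniteMeasureOnCompacts μ] [SMulInvariantMeasure G Ω μ]
    (h𝒱 : IsRegularBasis 𝒱) (hG : ∀ g : G, ∀ V ∈ 𝒱, g • V ∈ 𝒱) :
    IsAntichain (· ⊆ ·) 𝒱 := by
  intro A hA B hB hne hAB
  obtain ⟨hAc, hAo⟩ := (h𝒱.1 A hA).2
  obtain ⟨g, hBA⟩ := h𝒱.exists_subset_smul hG hB hA
  have hμ : μ B ≤ μ A := (measure_mono hBA).trans_eq (measure_smul μ g A)
  have hnull : μ (B \ A) = 0 := by
    rw [measure_sdiff hAB hAo.measurableSet.nullMeasurableSet hAc.measure_lt_top.ne]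
    exact tsub_eq_zero_of_le hμ
  have hBA' : B \ A = ∅ :=
    ((h𝒱.1 B hB).2.2.sdiff hAc.isClosed).measure_eq_zero_iff μ |>.1 hnull
  exact hne (Subset.antisymm hAB (sdiff_eq_empty.1 hBA'))

theorem pairwiseDisjoint (h𝒱 : IsRegularBasis 𝒱) (hanti : IsAntichain (· ⊆ ·) 𝒱) :
    𝒱.PairwiseDisjoint id := by
  intro A hA B hB hne
  refine disjoint_iff_inter_eq_empty.2 ((h𝒱.2.2.1 A hA B hB).resolve_right fun hAB => hne ?_)
  exact (hanti.eq hAB hA inter_subset_left).symm.trans (hanti.eq hAB hB inter_subset_right)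

end IsRegularBasis

theorem isRegularBasis_range_singleton {Ω : Type*} [TopologicalSpace Ω] [DiscreteTopology Ω]
    [Nonempty Ω] : IsRegularBasis (range fun x : Ω => ({x} : Set Ω)) := by
  refine ⟨?_, ?_, ?_, ?_⟩
  · rintro V ⟨x, rfl⟩
    exact ⟨singleton_nonempty x, isCompact_singleton, isOpen_discrete _⟩
  · rintro F hF V₀ ⟨x, rfl⟩ heq
    dsimp only at heq ⊢
    obtain ⟨W, hWF, hxW⟩ := mem_iUnion₂.1 (heq ▸ mem_singleton x)
    obtain ⟨y, rfl⟩ := hF hWF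
    rwa [mem_singleton_iff.1 hxW]
  · rintro V ⟨x, rfl⟩ W ⟨y, rfl⟩
    by_cases hxy : x = y
    · exact .inr ⟨x, by simp [hxy]⟩
    · exact .inl (singleton_inter_eq_empty.2 hxy)
  · rintro 𝒰 hsub - hunion hdiff U hU -
    obtain ⟨x₀⟩ := ‹Nonempty Ω›
    have hempty : ∅ ∈ 𝒰 := sdiff_self ▸ hdiff _ (hsub ⟨x₀, rfl⟩) _ (hsub ⟨x₀, rfl⟩)
    replace hU := isCompact_iff_finite.1 hU
    induction U, hU using Finite.induction_on with
    | empty => exact hempty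
    | @insert a s _ _ ih => exact insert_eq a s ▸ hunion _ (hsub ⟨a, rfl⟩) _ ih

theorem stmt5_general {G Ω : Type*} [Group G]
    [TopologicalSpace Ω] [LocallyCompactSpace Ω] [T2Space Ω] [TotallyDisconnectedSpace Ω]
    [MeasurableSpace Ω] [BorelSpace Ω]
    [MulAction G Ω] (hcont : ∀ g : G, Continuous fun x : Ω => g • x)
    (hmin : ∀ U : Set Ω, IsOpen U → U.Nonempty → (⋃ g : G, g • U) = Set.univ)
    (μ : Measure Ω) (hμ0 : μ ≠ 0) (hreg : μ.Regular)
    (hinv : ∀ (g : G) (s : Set Ω), μ (g • s) = μ s) :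
    (∃ 𝒱 : Set (Set Ω), IsRegularBasis 𝒱 ∧ ∀ (g : G), ∀ V ∈ 𝒱, g • V ∈ 𝒱) ↔
      DiscreteTopology Ω := by
  have : ContinuousConstSMul G Ω := ⟨hcont⟩
  have : MulAction.IsMinimal G Ω := MulAction.isMinimal_of_iUnion_smul_eq_univ hmin
  have : SMulInvariantMeasure G Ω μ := ((smulInvariantMeasure_tfae G μ).out 0 4).2 hinv
  have : μ.IsOpenPosMeasure :=
    ⟨fun U hU hne => (measure_isOpen_pos_of_smulInvariant_of_ne_zero G hμ0 hU hne).ne'⟩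
  constructor
  · rintro ⟨𝒱, h𝒱, hG⟩
    have hanti := h𝒱.isAntichain μ hG
    exact discreteTopology_of_isAntichain_of_forall_mem_subset (fun A hA => (h𝒱.1 A hA).2.2)
      hanti fun K hK hKo => h𝒱.2.2.2.exists_mem_subset_of_pairwiseDisjoint
        (h𝒱.pairwiseDisjoint hanti) hK hKo
  · intro _
    have : NeZero μ := ⟨hμ0⟩
    have := μ.nonempty_of_neZero
    refine ⟨_, isRegularBasis_range_singleton, ?_⟩
    rintro g V ⟨x, rfl⟩
    exact ⟨g • x, smul_set_singleton.symm⟩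

/-- If a countable discrete group `G` acts minimally by homeomorphisms on a
totally disconnected locally compact Hausdorff space `Ω` admitting a nonzero `G`-invariant
regular Borel measure (finite on compact sets), then `Ω` has a `G`-invariant regular basis
for its compact open subsets if and only if `Ω` is discrete. -/
theorem stmt5 {G Ω : Type*} [Group G] [Countable G]
    [TopologicalSpace Ω] [LocallyCompactSpace Ω] [T2Space Ω] [TotallyDisconnectedSpace Ω]
    [MeasurableSpace Ω] [BorelSpace Ω]
    [MulAction G Ω] (hcont : ∀ g : G, Continuous fun x : Ω => g • x)
    (hmin : ∀ U : Set Ω, IsOpen U → U.Nonempty → (⋃ g : G, g • U) = Set.univ)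
    (μ : Measure Ω) (hμ0 : μ ≠ 0) (hreg : μ.Regular)
    (hinv : ∀ (g : G) (s : Set Ω), μ (g • s) = μ s) :
    (∃ 𝒱 : Set (Set Ω), IsRegularBasis 𝒱 ∧ ∀ (g : G), ∀ V ∈ 𝒱, g • V ∈ 𝒱) ↔
      DiscreteTopology Ω :=
  stmt5_general hcont hmin μ hμ0 hreg hinv
end

section
/- Let G be a locally compact Hausdorff topological group with a left Haar measure, acting properly and continuously on a locally compact Hausdorff space X such that the orbit space G\X is compact. Then there exists a continuous function c : X → [0,∞) with compact support such that for every x ∈ X, ∫_G c(s⁻¹·x)² ds = 1 (the integral taken with respect to the left Haar measure on G). -/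
/-!
Choose a compact set `K` meeting every orbit (possible since `G\X` is compact and the quotient
map is open) and a compactly supported `f ≥ 0` with `f = 1` on `K`. Properness makes
`s ↦ f (s⁻¹ • x)` compactly supported, locally uniformly in `x`, so
`F x = ∫ f (s⁻¹ • x)² ds` is continuous; it is positive because every orbit meets `K`, and
`G`-invariant by left invariance of the Haar measure. Then `c = f / √F` works.
-/

open MeasureTheory Set Topology Pointwise

theorem continuous_integral_of_locally_uniformly_compact_support {X Y E : Type*}
    [TopologicalSpace X] [TopologicalSpace Y] [MeasurableSpace Y] [OpensMeasurableSpace Y]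
    [NormedAddCommGroup E] [NormedSpace ℝ E] {μ : Measure Y} [IsFiniteMeasureOnCompacts μ]
    {f : X → Y → E} (hf : Continuous f.uncurry)
    (hfs : ∀ x₀, ∃ N ∈ 𝓝 x₀, ∃ k : Set Y, IsCompact k ∧ ∀ x ∈ N, ∀ y ∉ k, f x y = 0) :
    Continuous fun x => ∫ y, f x y ∂μ := by
  refine continuous_iff_continuousAt.2 fun x₀ => ?_
  obtain ⟨N, hN, k, hk, hfk⟩ := hfs x₀
  exact (continuousOn_integral_of_compact_support hk hf.continuousOn
    fun x y hx hy => hfk x hx y hy).continuousAt hN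

namespace MulAction

theorem integral_inv_smul_smul {G X E : Type*} [Group G] [MulAction G X]
    [MeasurableSpace G] [MeasurableMul G] [NormedAddCommGroup E] [NormedSpace ℝ E]
    (μ : Measure G) [μ.IsMulLeftInvariant] (f : X → E) (t : G) (x : X) :
    ∫ s, f (s⁻¹ • t • x) ∂μ = ∫ s, f (s⁻¹ • x) ∂μ := by
  simpa only [mul_inv_rev, inv_inv, mul_smul]
    using integral_mul_left_eq_self (μ := μ) (fun s => f (s⁻¹ • x)) t⁻¹

variable {G X : Type*} [Group G] [TopologicalSpace X] [MulAction G X]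

theorem exists_isCompact_forall_exists_smul_mem [WeaklyLocallyCompactSpace X]
    [ContinuousConstSMul G X] [CompactSpace (Quotient (orbitRel G X))] :
    ∃ K : Set X, IsCompact K ∧ ∀ x, ∃ g : G, g • x ∈ K := by
  choose V hVc hVn using fun x : X => exists_compact_mem_nhds x
  let π : X → Quotient (orbitRel G X) := Quotient.mk _
  obtain ⟨t, ht⟩ := isCompact_univ.elim_finite_subcover (fun x => π '' interior (V x))
    (fun x => isOpenMap_quotient_mk'_mul _ isOpen_interior)
    fun q _ => mem_iUnion.2 ⟨q.out, q.out, mem_interior_iff_mem_nhds.2 (hVn _), q.out_eq⟩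
  refine ⟨⋃ x ∈ t, V x, t.isCompact_biUnion fun x _ => hVc x, fun y => ?_⟩
  obtain ⟨x, hx, z, hz, hzy⟩ := mem_iUnion₂.1 (ht (mem_univ (π y)))
  obtain ⟨g, rfl⟩ : z ∈ orbit G y := Quotient.exact hzy
  exact ⟨g, mem_iUnion₂.2 ⟨x, hx, interior_subset hz⟩⟩

variable [TopologicalSpace G] [IsTopologicalGroup G] [ProperSMul G X]

theorem exists_isCompact_inv_smul_eq_zero {M : Type*} [Zero M] {f : X → M}
    (hf : HasCompactSupport f) {N : Set X} (hN : IsCompact N) :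
    ∃ k : Set G, IsCompact k ∧ ∀ x ∈ N, ∀ s ∉ k, f (s⁻¹ • x) = 0 := by
  refine ⟨{g : G | (g • N ∩ tsupport f).Nonempty}⁻¹,
    (ProperSMul.isCompact_setOfPred_inter_nonempty hN hf).inv, fun x hx s hs => ?_⟩
  refine image_eq_zero_of_notMem_tsupport fun hsx => hs ?_
  exact ⟨s⁻¹ • x, smul_mem_smul_set hx, hsx⟩

theorem hasCompactSupport_inv_smul {M : Type*} [Zero M] {f : X → M}
    (hf : HasCompactSupport f) (x : X) : HasCompactSupport fun s : G => f (s⁻¹ • x) := by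
  obtain ⟨k, hk, hfk⟩ := exists_isCompact_inv_smul_eq_zero (G := G) hf isCompact_singleton
  exact HasCompactSupport.intro hk fun s hs => hfk x rfl s hs

variable [ContinuousSMul G X] [MeasurableSpace G] [BorelSpace G] (μ : Measure G)
  {E : Type*} [NormedAddCommGroup E] [NormedSpace ℝ E]

theorem continuous_integral_inv_smul [WeaklyLocallyCompactSpace X] [IsFiniteMeasureOnCompacts μ]
    {f : X → E} (hf : Continuous f) (hfc : HasCompactSupport f) :
    Continuous fun x => ∫ s, f (s⁻¹ • x) ∂μ := by
  refine continuous_integral_of_locally_uniformly_compact_support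
    (f := fun x (s : G) => f (s⁻¹ • x)) (by fun_prop) fun x₀ => ?_
  obtain ⟨N, hNc, hN⟩ := exists_compact_mem_nhds x₀
  exact ⟨N, hN, exists_isCompact_inv_smul_eq_zero hfc hNc⟩

theorem integral_inv_smul_pos [IsFiniteMeasureOnCompacts μ] [μ.IsOpenPosMeasure]
    {f : X → ℝ} (hf : Continuous f) (hfc : HasCompactSupport f) (hf0 : 0 ≤ f) {x : X} {g : G}
    (hg : f (g • x) ≠ 0) : 0 < ∫ s, f (s⁻¹ • x) ∂μ :=
  Continuous.integral_pos_of_hasCompactSupport_nonneg_nonzero (by fun_prop)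
    (hasCompactSupport_inv_smul hfc x) (fun s => hf0 _) (x := g⁻¹) (by rwa [inv_inv])

theorem exists_cutoffFunction [LocallyCompactSpace X] [T2Space X]
    [CompactSpace (Quotient (orbitRel G X))] [μ.IsHaarMeasure] :
    ∃ c : X → ℝ, Continuous c ∧ HasCompactSupport c ∧ (∀ x, 0 ≤ c x) ∧
      ∀ x : X, ∫ s : G, (c (s⁻¹ • x)) ^ 2 ∂μ = 1 := by
  obtain ⟨K, hK, hGK⟩ := exists_isCompact_forall_exists_smul_mem (G := G) (X := X)
  obtain ⟨f, hfK, -, hfc, hf01⟩ :=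
    exists_continuous_one_zero_of_isCompact hK isClosed_empty (disjoint_empty K)
  have hf2c : HasCompactSupport fun x => f x ^ 2 := hfc.comp_left (zero_pow two_ne_zero)
  set F : X → ℝ := fun x => ∫ s, f (s⁻¹ • x) ^ 2 ∂μ
  have hF_pos (x : X) : 0 < F x := by
    obtain ⟨g, hg⟩ := hGK x
    exact integral_inv_smul_pos μ (by fun_prop) hf2c (fun _ => sq_nonneg _) (g := g)
      (by simp [hfK hg])
  have hF_cont : Continuous F := continuous_integral_inv_smul μ (by fun_prop) hf2c
  refine ⟨fun x => f x * (√(F x))⁻¹, ?_, hfc.mul_right, fun x => ?_, fun x => ?_⟩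
  · exact f.continuous.mul (hF_cont.sqrt.inv₀ fun x => (Real.sqrt_pos.2 (hF_pos x)).ne')
  · exact mul_nonneg (hf01 x).1 (inv_nonneg.2 (Real.sqrt_nonneg _))
  · have hF_inv (s : G) : F (s⁻¹ • x) = F x :=
      integral_inv_smul_smul μ (fun y => f y ^ 2) s⁻¹ x
    simp only [mul_pow, inv_pow, Real.sq_sqrt (hF_pos _).le, hF_inv]
    rw [integral_mul_const, mul_inv_cancel₀ (hF_pos x).ne']

end MulAction

theorem stmt10_general {G X : Type*} [Group G] [TopologicalSpace G] [IsTopologicalGroup G]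
    [MeasurableSpace G] [BorelSpace G]
    [TopologicalSpace X] [LocallyCompactSpace X] [T2Space X]
    [MulAction G X] [ContinuousSMul G X]
    (hproper : ∀ K : Set (X × X), IsCompact K →
      IsCompact ((fun p : G × X => (p.1 • p.2, p.2)) ⁻¹' K))
    (hcq : CompactSpace (Quotient (MulAction.orbitRel G X)))
    (μ : Measure G) [μ.IsHaarMeasure] :
    ∃ c : X → ℝ, Continuous c ∧ HasCompactSupport c ∧ (∀ x, 0 ≤ c x) ∧
      ∀ x : X, ∫ s : G, (c (s⁻¹ • x)) ^ 2 ∂μ = 1 := by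
  have : ProperSMul G X :=
    ⟨isProperMap_iff_isCompact_preimage.2 ⟨by fun_prop, fun K => hproper K⟩⟩
  exact MulAction.exists_cutoffFunction μ

/-- If a locally compact Hausdorff group `G` with left Haar measure acts
properly on a locally compact Hausdorff space `X` with compact orbit space, then there
exists a continuous, compactly supported cut-off function `c : X → [0,∞)` with
`∫_G c(s⁻¹ • x)² ds = 1` for every `x ∈ X`. -/
theorem stmt10 {G X : Type*} [Group G] [TopologicalSpace G] [IsTopologicalGroup G]
    [LocallyCompactSpace G] [T2Space G] [MeasurableSpace G] [BorelSpace G]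
    [TopologicalSpace X] [LocallyCompactSpace X] [T2Space X]
    [MulAction G X] [ContinuousSMul G X]
    (hproper : ∀ K : Set (X × X), IsCompact K →
      IsCompact ((fun p : G × X => (p.1 • p.2, p.2)) ⁻¹' K))
    (hcq : CompactSpace (Quotient (MulAction.orbitRel G X)))
    (μ : Measure G) [μ.IsHaarMeasure] :
    ∃ c : X → ℝ, Continuous c ∧ HasCompactSupport c ∧ (∀ x, 0 ≤ c x) ∧
      ∀ x : X, ∫ s : G, (c (s⁻¹ • x)) ^ 2 ∂μ = 1 :=
  stmt10_general hproper hcq μ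
end

section
/- Let G be a locally compact Hausdorff topological group with a left Haar measure, acting properly and continuously on a locally compact Hausdorff space X, let c : X → [0,∞) be a continuous compactly supported function satisfying ∫_G c(t⁻¹·x)² dt = 1 for all x ∈ X, and let Δ : G → ℝ_{>0} be a continuous group homomorphism into the multiplicative group of positive reals (for example, the modular function of G). Define p : G × X → ℝ by p(s,x) = Δ(s)^{-1/2} c(x) c(s⁻¹·x). Then for all s ∈ G and x ∈ X, the convolution identity ∫_G p(t,x) · p(t⁻¹s, t⁻¹·x) dt = p(s,x) holds (all integrals taken with respect to the left Haar measure on G); in other words, p is an idempotent under this convolution. -/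
open MeasureTheory

/-!
The integrand factors as `p(s,x) · c(t⁻¹ • x)²`: the two `Δ`-factors combine to `Δ(s)^{-1/2}`
by multiplicativity, and `(t⁻¹ s)⁻¹ • t⁻¹ • x = s⁻¹ • x`. The normalisation of the cut-off
function then integrates the remaining factor to `1`.
-/

theorem rpow_mul_rpow_inv_mul_of_map_mul {G : Type*} [Group G] {Δ : G → ℝ}
    (hΔpos : ∀ g, 0 < Δ g) (hΔmul : ∀ g h : G, Δ (g * h) = Δ g * Δ h) (r : ℝ) (s t : G) :
    Δ t ^ r * Δ (t⁻¹ * s) ^ r = Δ s ^ r := by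
  rw [← Real.mul_rpow (hΔpos t).le (hΔpos _).le, ← hΔmul, mul_inv_cancel_left]

theorem kernel_mul_kernel_eq {G X : Type*} [Group G] [MulAction G X] {Δ : G → ℝ}
    (hΔpos : ∀ g, 0 < Δ g) (hΔmul : ∀ g h : G, Δ (g * h) = Δ g * Δ h) {c : X → ℝ} {r : ℝ}
    {p : G × X → ℝ} (hp : ∀ (s : G) (x : X), p (s, x) = Δ s ^ r * (c x * c (s⁻¹ • x)))
    (s t : G) (x : X) :
    p (t, x) * p (t⁻¹ * s, t⁻¹ • x) = p (s, x) * c (t⁻¹ • x) ^ 2 := by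
  have hsmul : (t⁻¹ * s)⁻¹ • t⁻¹ • x = s⁻¹ • x := by simp [mul_smul]
  rw [hp, hp, hp, hsmul, ← rpow_mul_rpow_inv_mul_of_map_mul hΔpos hΔmul r s t]
  ring

theorem stmt11_general {G X : Type*} [Group G] [MeasurableSpace G]
    [MulAction G X]
    (μ : Measure G)
    (c : X → ℝ)
    (hint : ∀ x : X, ∫ t : G, (c (t⁻¹ • x)) ^ 2 ∂μ = 1)
    (Δ : G → ℝ) (hΔpos : ∀ g, 0 < Δ g)
    (hΔmul : ∀ g h : G, Δ (g * h) = Δ g * Δ h)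
    (p : G × X → ℝ)
    (hp : ∀ (s : G) (x : X), p (s, x) = Δ s ^ (-(1 / 2) : ℝ) * (c x * c (s⁻¹ • x))) :
    ∀ (s : G) (x : X), ∫ t : G, p (t, x) * p (t⁻¹ * s, t⁻¹ • x) ∂μ = p (s, x) := by
  intro s x
  simp_rw [kernel_mul_kernel_eq hΔpos hΔmul hp s _ x]
  rw [integral_const_mul, hint, mul_one]

/-- Let `G` be a locally compact Hausdorff group with left Haar measure `μ`
acting properly on a locally compact Hausdorff space `X`, let `c` be a cut-off function
(`∫_G c(t⁻¹ • x)² dt = 1`), and let `Δ : G → ℝ_{>0}` be a continuous homomorphism. Then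
`p(s,x) = Δ(s)^{-1/2} c(x) c(s⁻¹ • x)` satisfies the convolution idempotency identity
`∫_G p(t,x) p(t⁻¹s, t⁻¹ • x) dt = p(s,x)` for all `s ∈ G`, `x ∈ X`. -/
theorem stmt11 {G X : Type*} [Group G] [TopologicalSpace G] [IsTopologicalGroup G]
    [LocallyCompactSpace G] [T2Space G] [MeasurableSpace G] [BorelSpace G]
    [TopologicalSpace X] [LocallyCompactSpace X] [T2Space X]
    [MulAction G X] [ContinuousSMul G X]
    (hproper : ∀ K : Set (X × X), IsCompact K →
      IsCompact ((fun p : G × X => (p.1 • p.2, p.2)) ⁻¹' K))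
    (μ : Measure G) [μ.IsHaarMeasure]
    (c : X → ℝ) (hc : Continuous c) (hcs : HasCompactSupport c) (hc0 : ∀ x, 0 ≤ c x)
    (hint : ∀ x : X, ∫ t : G, (c (t⁻¹ • x)) ^ 2 ∂μ = 1)
    (Δ : G → ℝ) (hΔpos : ∀ g, 0 < Δ g) (hΔcont : Continuous Δ)
    (hΔmul : ∀ g h : G, Δ (g * h) = Δ g * Δ h)
    (p : G × X → ℝ)
    (hp : ∀ (s : G) (x : X), p (s, x) = Δ s ^ (-(1 / 2) : ℝ) * (c x * c (s⁻¹ • x))) :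
    ∀ (s : G) (x : X), ∫ t : G, p (t, x) * p (t⁻¹ * s, t⁻¹ • x) ∂μ = p (s, x) :=
  stmt11_general μ c hint Δ hΔpos hΔmul p hp
end

section
/- Let ℓ²(ℤ,ℂ) denote the Hilbert space of square-summable functions ℤ → ℂ, and let sgn : ℤ → ℤ be given by sgn(n) = 1 for n > 0, sgn(0) = 0, sgn(n) = −1 for n < 0. For ξ : ℤ → ℂ define Fξ : ℤ → ℂ by (Fξ)(m) = (1 − sgn(m−1))·ξ(m−1) − (1 + sgn(m))·ξ(m). Then: (a) if ξ ∈ ℓ²(ℤ,ℂ) then Fξ ∈ ℓ²(ℤ,ℂ); (b) F maps ℓ²(ℤ,ℂ) onto ℓ²(ℤ,ℂ); and (c) the kernel of F in ℓ²(ℤ,ℂ) is the one-dimensional subspace spanned by the vector v with v(−1) = 1, v(0) = 2, v(1) = 1, and v(n) = 0 for all other n. (Thus F is a surjective Fredholm operator with one-dimensional kernel, hence of Fredholm index 1.) -/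
/-!
Componentwise, `(Fξ)(m) = 2ξ(m-1)` for `m < 0`, `(Fξ)(0) = 2ξ(-1) - ξ(0)`,
`(Fξ)(1) = ξ(0) - 2ξ(1)` and `(Fξ)(m) = -2ξ(m)` for `m ≥ 2`. So `|(Fξ)(m)| ≤ 2|ξ(m-1)| + 2|ξ(m)|`,
and the equation `Fξ = η` determines `ξ(n)` for `|n| ≥ 2` while leaving two equations in the
three unknowns `ξ(-1), ξ(0), ξ(1)`. Taking `ξ(0) = 0` gives a right inverse bounded by
`|ξ(n)| ≤ |η(n+1)| + |η(n)|`, and with `η = 0` the free parameter `ξ(-1)` spans the kernel.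
-/

/-- The operator `F̂₅` on functions `ℤ → ℂ`:
`(Fξ)(m) = (1 − sgn(m−1))·ξ(m−1) − (1 + sgn(m))·ξ(m)`. -/
noncomputable def hatF (ξ : ℤ → ℂ) : ℤ → ℂ := fun m =>
  ((1 - Int.sign (m - 1) : ℤ) : ℂ) * ξ (m - 1) - ((1 + Int.sign m : ℤ) : ℂ) * ξ m

/-- The vector `v = e₁ + 2e₀ + e₋₁` spanning the kernel. -/
noncomputable def kerVec : ℤ → ℂ := fun n =>
  if n = -1 then 1 else if n = 0 then 2 else if n = 1 then 1 else 0

open scoped ENNReal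

theorem memℓp_comp_equiv_iff {α β E : Type*} [NormedAddCommGroup E] {p : ℝ≥0∞} {f : α → E}
    (e : β ≃ α) : Memℓp (f ∘ e) p ↔ Memℓp f p := by
  obtain rfl | rfl | hp := p.trichotomy
  · simp only [memℓp_zero_iff]
    exact ⟨fun h => Set.Finite.of_preimage (f := e) h e.surjective,
      fun h => h.preimage e.injective.injOn⟩
  · simp only [memℓp_infty_iff]
    rw [← EquivLike.range_comp (fun a => ‖f a‖) e]
    rfl
  · simp only [memℓp_gen_iff hp, Function.comp_apply]
    exact e.summable_iff (f := fun a => ‖f a‖ ^ p.toReal)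

theorem hatF_apply_of_neg (ξ : ℤ → ℂ) {m : ℤ} (hm : m < 0) : hatF ξ m = 2 * ξ (m - 1) := by
  simp [hatF, Int.sign_eq_neg_one_of_neg hm, Int.sign_eq_neg_one_of_neg (show m - 1 < 0 by omega)]

theorem hatF_apply_zero (ξ : ℤ → ℂ) : hatF ξ 0 = 2 * ξ (-1) - ξ 0 := by
  norm_num [hatF]

theorem hatF_apply_one (ξ : ℤ → ℂ) : hatF ξ 1 = ξ 0 - 2 * ξ 1 := by
  norm_num [hatF]

theorem hatF_apply_of_two_le (ξ : ℤ → ℂ) {m : ℤ} (hm : 2 ≤ m) : hatF ξ m = -2 * ξ m := by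
  simp [hatF, Int.sign_eq_one_of_pos (show 0 < m by omega),
    Int.sign_eq_one_of_pos (show 0 < m - 1 by omega)]

theorem hatF_smul (z : ℂ) (ξ : ℤ → ℂ) : hatF (z • ξ) = z • hatF ξ := by
  ext m
  simp only [hatF, Pi.smul_apply, smul_eq_mul]
  ring

theorem norm_hatF_apply_le (ξ : ℤ → ℂ) (m : ℤ) : ‖hatF ξ m‖ ≤ 2 * ‖ξ (m - 1)‖ + 2 * ‖ξ m‖ := by
  have h₁ : ‖((1 - (m - 1).sign : ℤ) : ℂ)‖ ≤ 2 := by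
    rcases Int.sign_trichotomy (m - 1) with h | h | h <;> norm_num [h]
  have h₂ : ‖((1 + m.sign : ℤ) : ℂ)‖ ≤ 2 := by
    rcases Int.sign_trichotomy m with h | h | h <;> norm_num [h]
  calc ‖hatF ξ m‖
      ≤ ‖((1 - (m - 1).sign : ℤ) : ℂ)‖ * ‖ξ (m - 1)‖ + ‖((1 + m.sign : ℤ) : ℂ)‖ * ‖ξ m‖ := by
        rw [hatF, ← norm_mul, ← norm_mul]
        exact norm_sub_le _ _
    _ ≤ 2 * ‖ξ (m - 1)‖ + 2 * ‖ξ m‖ := by gcongr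

theorem memℓp_hatF {p : ℝ≥0∞} {ξ : ℤ → ℂ} (hξ : Memℓp ξ p) : Memℓp (hatF ξ) p :=
  ((((memℓp_comp_equiv_iff (Equiv.subRight 1)).2 hξ).norm.const_mul 2).add
    (hξ.norm.const_mul 2)).mono (norm_hatF_apply_le ξ)

noncomputable def hatFRightInv (η : ℤ → ℂ) : ℤ → ℂ := fun n =>
  if n < 0 then η (n + 1) / 2 else if n = 0 then 0 else -η n / 2

theorem hatF_hatFRightInv (η : ℤ → ℂ) : hatF (hatFRightInv η) = η := by
  ext m
  obtain hm | rfl | rfl | hm : m < 0 ∨ m = 0 ∨ m = 1 ∨ 2 ≤ m := by omega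
  · simp only [hatF_apply_of_neg _ hm, hatFRightInv, if_pos (show m - 1 < 0 by omega),
      sub_add_cancel]
    ring
  · simp [hatF_apply_zero, hatFRightInv, mul_div_cancel₀]
  · simp [hatF_apply_one, hatFRightInv, neg_div, mul_div_cancel₀]
  · simp only [hatF_apply_of_two_le _ hm, hatFRightInv, if_neg (show ¬m < 0 by omega),
      if_neg (show m ≠ 0 by omega)]
    ring

theorem norm_hatFRightInv_apply_le (η : ℤ → ℂ) (n : ℤ) :
    ‖hatFRightInv η n‖ ≤ ‖η (n + 1)‖ + ‖η n‖ := by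
  unfold hatFRightInv
  split_ifs <;> simp only [norm_zero, norm_neg, norm_div, Complex.norm_ofNat] <;>
    linarith [norm_nonneg (η n), norm_nonneg (η (n + 1))]

theorem memℓp_hatFRightInv {p : ℝ≥0∞} {η : ℤ → ℂ} (hη : Memℓp η p) :
    Memℓp (hatFRightInv η) p :=
  (((memℓp_comp_equiv_iff (Equiv.addRight 1)).2 hη).norm.add hη.norm).mono
    (norm_hatFRightInv_apply_le η)

theorem kerVec_eq_zero {n : ℤ} (hn : n < -1 ∨ 1 < n) : kerVec n = 0 := by
  simp only [kerVec]
  split_ifs <;> first | rfl | omega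

theorem hatF_kerVec : hatF kerVec = 0 := by
  ext m
  obtain hm | rfl | rfl | hm : m < 0 ∨ m = 0 ∨ m = 1 ∨ 2 ≤ m := by omega
  · simp [hatF_apply_of_neg _ hm, kerVec_eq_zero (show m - 1 < -1 ∨ 1 < m - 1 by omega)]
  · norm_num [hatF_apply_zero, kerVec]
  · norm_num [hatF_apply_one, kerVec]
  · simp [hatF_apply_of_two_le _ hm, kerVec_eq_zero (show m < -1 ∨ 1 < m by omega)]

theorem hatF_eq_zero_iff (ξ : ℤ → ℂ) : hatF ξ = 0 ↔ ∃ z : ℂ, ξ = z • kerVec := by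
  refine ⟨fun h => ⟨ξ (-1), funext fun n => ?_⟩, ?_⟩
  · have hF (m : ℤ) : hatF ξ m = 0 := congrFun h m
    obtain hn | rfl | rfl | rfl | hn : n ≤ -2 ∨ n = -1 ∨ n = 0 ∨ n = 1 ∨ 2 ≤ n := by omega
    · rw [Pi.smul_apply, kerVec_eq_zero (by omega), smul_zero]
      have hFn := hatF_apply_of_neg ξ (show n + 1 < 0 by omega)
      rw [add_sub_cancel_right] at hFn
      linear_combination (hF (n + 1) - hFn) / 2
    · simp [kerVec]
    · rw [Pi.smul_apply, smul_eq_mul, kerVec, if_neg (by norm_num), if_pos rfl]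
      linear_combination hatF_apply_zero ξ - hF 0
    · rw [Pi.smul_apply, smul_eq_mul, kerVec, if_neg (by norm_num), if_neg (by norm_num),
        if_pos rfl]
      linear_combination (hatF_apply_one ξ - hF 1 + hatF_apply_zero ξ - hF 0) / 2
    · rw [Pi.smul_apply, kerVec_eq_zero (by omega), smul_zero]
      linear_combination (hatF_apply_of_two_le ξ hn - hF n) / 2
  · rintro ⟨z, rfl⟩
    rw [hatF_smul, hatF_kerVec, smul_zero]

/-- The operator `F` with `(Fξ)(m) = (1 − sgn(m−1))·ξ(m−1) − (1 + sgn(m))·ξ(m)`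
(a) maps `ℓ²(ℤ,ℂ)` to `ℓ²(ℤ,ℂ)`; (b) maps `ℓ²(ℤ,ℂ)` onto `ℓ²(ℤ,ℂ)`; and (c) its kernel in
`ℓ²(ℤ,ℂ)` is the one-dimensional subspace spanned by `v` with `v(−1) = 1`, `v(0) = 2`,
`v(1) = 1` and `v(n) = 0` otherwise. -/
theorem stmt12 :
    (∀ ξ : lp (fun _ : ℤ => ℂ) 2, Memℓp (hatF ξ) 2) ∧
    (∀ η : lp (fun _ : ℤ => ℂ) 2, ∃ ξ : lp (fun _ : ℤ => ℂ) 2,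
      ∀ m : ℤ, hatF ξ m = η m) ∧
    (∀ ξ : lp (fun _ : ℤ => ℂ) 2,
      (∀ m : ℤ, hatF ξ m = 0) ↔ ∃ z : ℂ, ∀ n : ℤ, ξ n = z * kerVec n) := by
  refine ⟨fun ξ => memℓp_hatF (lp.memℓp ξ), fun η => ?_, fun ξ => ?_⟩
  · exact ⟨⟨hatFRightInv η, memℓp_hatFRightInv (lp.memℓp η)⟩,
      congrFun (hatF_hatFRightInv η)⟩
  · simpa only [funext_iff, Pi.zero_apply, Pi.smul_apply, smul_eq_mul] using hatF_eq_zero_iff ξ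
end

section
/- Let ℓ²(ℤ,ℂ) denote the Hilbert space of square-summable functions ℤ → ℂ, and let sgn : ℤ → ℝ be given by sgn(n) = 1 for n > 0, sgn(0) = 0, sgn(n) = −1 for n < 0. Define a_n = n/√(1+n²) − sgn(n) for n ∈ ℤ. Then there is a bounded (continuous) linear operator T on ℓ²(ℤ,ℂ) given by (Tξ)(n) = a_n · ξ(n), and T is a compact operator. -/
/-!
Multiplication by a bounded sequence `b` is a bounded operator on `ℓ^p` of norm at most
`‖b‖_∞`, depending continuously on `b`. If `b` tends to `0` at infinity, its finite truncations
converge to `b` in `ℓ^∞`; multiplication by a finitely supported sequence has finite rank, so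
multiplication by `b` is a norm limit of compact operators, hence compact. The multiplier
`n / √(1 + n²) - sgn n` is `O(1 / |n|)`, since for `x > 0`
`1 - x / √(1 + x²) = 1 / (√(1 + x²) (√(1 + x²) + x))`.
-/

/-- The multiplier sequence `a n = n/√(1+n²) − sgn(n)`. -/
noncomputable def mulSeq (n : ℤ) : ℝ :=
  (n : ℝ) / Real.sqrt (1 + (n : ℝ) ^ 2) - (Int.sign n : ℝ)

open scoped ENNReal
open Filter Topology

namespace lp

variable {ι 𝕜 : Type*} [RCLike 𝕜] {p : ℝ≥0∞}

theorem norm_infty_mul_apply_le (b : lp (fun _ : ι => 𝕜) ∞) (ξ : ι → 𝕜) (i : ι) :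
    ‖b i * ξ i‖ ≤ ‖b‖ * ‖ξ i‖ := by
  rw [norm_mul]
  exact mul_le_mul_of_nonneg_right (norm_apply_le_norm ENNReal.top_ne_zero b i) (norm_nonneg _)

theorem memℓp_infty_mul (b : lp (fun _ : ι => 𝕜) ∞) (ξ : lp (fun _ : ι => 𝕜) p) :
    Memℓp (fun i => b i * ξ i) p :=
  ((lp.memℓp ξ).norm.const_smul ‖b‖).mono (norm_infty_mul_apply_le b ξ)

theorem norm_infty_mul_le (hp : p ≠ 0) (b : lp (fun _ : ι => 𝕜) ∞)
    (ξ : lp (fun _ : ι => 𝕜) p) :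
    ‖(⟨fun i => b i * ξ i, memℓp_infty_mul b ξ⟩ : lp (fun _ : ι => 𝕜) p)‖ ≤ ‖b‖ * ‖ξ‖ := by
  calc _ ≤ ‖(‖b‖ : 𝕜) • ξ‖ := by
        refine norm_mono hp fun i => ?_
        rw [coeFn_smul, Pi.smul_apply, norm_smul, RCLike.norm_ofReal, abs_norm]
        exact norm_infty_mul_apply_le b ξ i
    _ = ‖b‖ * ‖ξ‖ := by rw [norm_const_smul hp, RCLike.norm_ofReal, abs_norm]

variable [Fact (1 ≤ p)]

variable (ι 𝕜 p) in
noncomputable def mulCLM :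
    lp (fun _ : ι => 𝕜) ∞ →L[𝕜] lp (fun _ : ι => 𝕜) p →L[𝕜] lp (fun _ : ι => 𝕜) p :=
  LinearMap.mkContinuous₂
    (LinearMap.mk₂ 𝕜 (fun b ξ => ⟨fun i => b i * ξ i, memℓp_infty_mul b ξ⟩)
      (fun _ _ _ => lp.ext <| funext fun _ => add_mul _ _ _)
      (fun _ _ _ => lp.ext <| funext fun _ => mul_assoc _ _ _)
      (fun _ _ _ => lp.ext <| funext fun _ => mul_add _ _ _)
      (fun _ _ _ => lp.ext <| funext fun _ => mul_left_comm _ _ _))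
    1 fun b ξ => by
      rw [one_mul]
      exact norm_infty_mul_le (zero_lt_one.trans_le Fact.out).ne' b ξ

@[simp]
theorem mulCLM_apply_apply (b : lp (fun _ : ι => 𝕜) ∞) (ξ : lp (fun _ : ι => 𝕜) p) (i : ι) :
    mulCLM ι 𝕜 p b ξ i = b i * ξ i := rfl

variable [DecidableEq ι]

theorem mulCLM_single (i : ι) (c : 𝕜) :
    mulCLM ι 𝕜 p (lp.single ∞ i c) =
      (singleContinuousLinearMap 𝕜 (fun _ : ι => 𝕜) p i).comp
        (c • evalCLM 𝕜 (fun _ : ι => 𝕜) p i) := by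
  ext ξ j
  rcases eq_or_ne j i with rfl | hji
  · simp [evalCLM]
  · simp [hji]

theorem isCompactOperator_mulCLM_single (i : ι) (c : 𝕜) :
    IsCompactOperator (mulCLM ι 𝕜 p (lp.single ∞ i c)) := by
  rw [mulCLM_single]
  exact (isCompactOperator_of_locallyCompactSpace_dom
    (c • evalCLM 𝕜 (fun _ : ι => 𝕜) p i)).clm_comp 
      (singleContinuousLinearMap 𝕜 (fun _ : ι => 𝕜) p i)

theorem tendsto_sum_single_infty {b : lp (fun _ : ι => 𝕜) ∞}
    (hb : Tendsto (fun i => b i) cofinite (𝓝 0)) :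
    Tendsto (fun s : Finset ι => ∑ i ∈ s, lp.single ∞ i (b i)) atTop (𝓝 b) := by
  refine Metric.tendsto_nhds.2 fun ε hε => ?_
  have hlarge : {i | ε / 2 ≤ ‖b i‖}.Finite := by
    have hsmall : ∀ᶠ i in cofinite, ‖b i‖ < ε / 2 :=
      hb.norm.eventually (gt_mem_nhds (by simpa using half_pos hε))
    simpa only [not_lt] using eventually_cofinite.1 hsmall
  filter_upwards [eventually_ge_atTop hlarge.toFinset] with s hs
  rw [dist_comm, dist_eq_norm]
  refine (norm_le_of_forall_le (half_pos hε).le fun i => ?_).trans_lt (half_lt_self hε)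
  have hcoord : (b - ∑ j ∈ s, lp.single ∞ j (b j)) i = if i ∈ s then 0 else b i := by
    rw [coeFn_sub, Pi.sub_apply, coeFn_sum, Finset.sum_apply]
    simp only [lp.single_apply, Finset.sum_pi_single]
    split_ifs <;> simp
  rw [hcoord]
  split_ifs with hi
  · simpa using (half_pos hε).le
  · exact (not_le.1 fun h : ε / 2 ≤ ‖b i‖ => hi (hs (hlarge.mem_toFinset.2 h))).le

theorem isCompactOperator_mulCLM {b : lp (fun _ : ι => 𝕜) ∞}
    (hb : Tendsto (fun i => b i) cofinite (𝓝 0)) : IsCompactOperator (mulCLM ι 𝕜 p b) :=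
  isCompactOperator_of_tendsto
    ((mulCLM ι 𝕜 p).continuous.tendsto b |>.comp (tendsto_sum_single_infty hb))
    (Eventually.of_forall fun s => by
      simp only [Function.comp_apply, map_sum]
      exact Submodule.sum_mem (compactOperator (RingHom.id 𝕜) _ _) fun i _ =>
        isCompactOperator_mulCLM_single i (b i))

end lp

theorem abs_div_sqrt_one_add_sq_sub_one_le {x : ℝ} (hx : 0 < x) :
    |x / √(1 + x ^ 2) - 1| ≤ x⁻¹ := by
  set s := √(1 + x ^ 2)
  have hs_sq : s ^ 2 = 1 + x ^ 2 := Real.sq_sqrt (by positivity)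
  have hxs : x < s := by nlinarith [Real.sqrt_nonneg (1 + x ^ 2)]
  have hs : 0 < s := hx.trans hxs
  rw [abs_sub_comm, abs_of_nonneg (by rw [sub_nonneg, div_le_one hs]; exact hxs.le),
    one_sub_div hs.ne', div_le_iff₀ hs, inv_mul_eq_div, le_div_iff₀ hx]
  have hprod : (s - x) * (s + x) = 1 := by nlinarith
  nlinarith [hprod]

theorem mulSeq_neg (n : ℤ) : mulSeq (-n) = -mulSeq n := by
  simp only [mulSeq, Int.cast_neg, neg_sq, Int.sign_neg, neg_div]
  ring

theorem abs_mulSeq_le {n : ℤ} (hn : n ≠ 0) : |mulSeq n| ≤ |(n : ℝ)|⁻¹ := by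
  wlog hpos : 0 < n generalizing n
  · simpa [mulSeq_neg] using this (neg_ne_zero.2 hn) (by omega)
  have hn' : (0 : ℝ) < n := Int.cast_pos.2 hpos
  rw [abs_of_pos hn']
  simpa [mulSeq, Int.sign_eq_one_of_pos hpos] using abs_div_sqrt_one_add_sq_sub_one_le hn'

theorem tendsto_mulSeq_cofinite : Tendsto mulSeq cofinite (𝓝 0) := by
  have hinv : Tendsto (fun n : ℤ => |(n : ℝ)|⁻¹) cofinite (𝓝 0) :=
    tendsto_inv_atTop_zero.comp (tendsto_norm_cocompact_atTop.comp Int.tendsto_coe_cofinite)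
  exact squeeze_zero_norm' ((eventually_cofinite_ne 0).mono fun n hn => abs_mulSeq_le hn) hinv

/-- There exists a bounded linear operator `T` on `ℓ²(ℤ,ℂ)` given by
pointwise multiplication with the sequence `a n = n/√(1+n²) − sgn(n)`, and `T` is a
compact operator. -/
theorem stmt13 :
    ∃ T : lp (fun _ : ℤ => ℂ) 2 →L[ℂ] lp (fun _ : ℤ => ℂ) 2,
      (∀ (ξ : lp (fun _ : ℤ => ℂ) 2) (n : ℤ), (T ξ) n = (mulSeq n : ℂ) * ξ n) ∧
      IsCompactOperator (⇑T) := by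
  have hlim : Tendsto (fun n : ℤ => (mulSeq n : ℂ)) cofinite (𝓝 0) :=
    (Complex.continuous_ofReal.tendsto' 0 0 Complex.ofReal_zero).comp tendsto_mulSeq_cofinite
  let a : lp (fun _ : ℤ => ℂ) ∞ :=
    ⟨fun n => (mulSeq n : ℂ), memℓp_infty_iff.2 hlim.norm.bddAbove_range_of_cofinite⟩
  exact ⟨lp.mulCLM ℤ ℂ 2 a, fun _ _ => rfl, lp.isCompactOperator_mulCLM hlim⟩
end

section
/- Let n ≥ 0 and let Q be the standard quadratic form Q(z) = ∑_{i=1}^{2n+1} z_i² on ℂ^{2n+1}. Then the Clifford algebra Cl(Q) over ℂ is isomorphic as a ℂ-algebra to the direct sum M_{2^n}(ℂ) ⊕ M_{2^n}(ℂ) of two copies of the algebra of 2^n × 2^n complex matrices. -/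
/-!
Splitting off two coordinates, `ℂ^{m+2} = ℂ^m ⊕ ℂ²`, the Pauli matrices give
`Cl(Q ⊕ (x² + y²)) ≅ M₂(Cl Q)` for every quadratic form `Q`: a generator `(v, w)` goes to
`s(v) σ_y + w₀ σ_z + w₁ σ_x`, where `s(v)` is the scalar matrix of `v ∈ Cl Q`. For the inverse,
let `E, F` be the images of the standard basis of `ℂ²` and `P = (1 + E)/2`; then `F^i P F^j` are
`2 × 2` matrix units, and `g : v ↦ -i v E F` maps `Cl Q` into their commutant, so
`M ↦ ∑ g(M i j) F^i P F^j` is an algebra map. Starting from `Cl(ℂ¹) ≅ ℂ × ℂ` (via the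
idempotents `(1 ± e)/2`), induction gives `Cl(ℂ^{2n+1}) ≅ M_{2ⁿ}(ℂ × ℂ) ≅ M_{2ⁿ}(ℂ) × M_{2ⁿ}(ℂ)`.
-/

open Finset Matrix Complex CliffordAlgebra QuadraticMap

noncomputable section

namespace Matrix

section LiftOfMatrixUnits

variable {R A B n : Type*} [CommSemiring R] [Semiring A] [Semiring B] [Algebra R A] [Algebra R B]
  [Fintype n] [DecidableEq n] (g : B →ₐ[R] A) (e : n → n → A)
  (he : ∀ i j k l, e i j * e k l = if j = k then e i l else 0) (he_sum : ∑ i, e i i = 1)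
  (hg : ∀ b i j, Commute (g b) (e i j))

def liftOfMatrixUnits : Matrix n n B →ₐ[R] A where
  toFun M := ∑ i, ∑ j, g (M i j) * e i j
  map_zero' := by simp
  map_add' M N := by simp [add_mul, sum_add_distrib]
  map_one' := by simp [one_apply, he_sum]
  map_mul' M N := by
    have key : ∀ i j k l, g (M i j) * e i j * (g (N k l) * e k l)
        = if j = k then g (M i j) * g (N j l) * e i l else 0 := by
      intro i j k l
      rw [mul_assoc, ← mul_assoc (e i j), ← (hg _ i j).eq, mul_assoc, he]
      split_ifs with h <;> simp [h, mul_assoc]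
    simp only [mul_apply, map_sum, map_mul, sum_mul_sum, key, sum_ite_irrel, sum_const_zero,
      Fintype.sum_ite_eq']
    simp only [sum_mul]
    exact sum_congr rfl fun i _ => sum_comm
  commutes' r := by
    simp [algebraMap_eq_diagonal, diagonal_apply, apply_ite, ← mul_sum, he_sum]

lemma liftOfMatrixUnits_apply (M : Matrix n n B) :
    liftOfMatrixUnits g e he he_sum hg M = ∑ i, ∑ j, g (M i j) * e i j := rfl

lemma liftOfMatrixUnits_scalar (b : B) : liftOfMatrixUnits g e he he_sum hg (scalar n b) = g b := by
  simp [liftOfMatrixUnits_apply, diagonal_apply, apply_ite, ← mul_sum, he_sum]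

lemma liftOfMatrixUnits_mapMatrix_ofId (M : Matrix n n R) :
    liftOfMatrixUnits g e he he_sum hg ((Algebra.ofId R B).mapMatrix M)
      = ∑ i, ∑ j, M i j • e i j := by
  simp [liftOfMatrixUnits_apply, Algebra.smul_def]

end LiftOfMatrixUnits

section

variable {R A B n : Type*} [CommSemiring R] [Semiring A] [Semiring B] [Algebra R A] [Algebra R B]
  [Fintype n] [DecidableEq n]

lemma scalar_commute_mapMatrix_ofId (a : A) (M : Matrix n n R) :
    Commute (scalar n a) ((Algebra.ofId R A).mapMatrix M) :=
  scalar_commute_iff.2 <| ext fun _ _ => (Algebra.commutes _ a).symm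

lemma scalar_mul_mapMatrix_ofId_single (a : A) (i j : n) :
    scalar n a * (Algebra.ofId R A).mapMatrix (single i j 1) = single i j a := by
  ext k l
  simp [single, diagonal_mul]

def prodAlgEquiv : Matrix n n (A × B) ≃ₐ[R] Matrix n n A × Matrix n n B :=
  AlgEquiv.ofBijective ((AlgHom.fst R A B).mapMatrix.prod (AlgHom.snd R A B).mapMatrix)
    ⟨fun _ _ h => ext fun i j => Prod.ext (congr_fun₂ congr($h.1) i j) (congr_fun₂ congr($h.2) i j),
      fun P => ⟨of fun i j => (P.1 i j, P.2 i j), rfl⟩⟩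

end

end Matrix

section FinTwoUnits

variable {A : Type*} [Ring A]

def finTwoUnits (P F : A) (i j : Fin 2) : A := F ^ (i : ℕ) * P * F ^ (j : ℕ)

variable {P F : A}

lemma finTwoUnits_mul (hP : IsIdempotentElem P) (hF : F * F = 1) (hFPF : F * P * F = 1 - P)
    (i j k l : Fin 2) :
    finTwoUnits P F i j * finTwoUnits P F k l = if j = k then finTwoUnits P F i l else 0 := by
  have hPFP : P * F * P = 0 := by
    calc P * F * P = P * (F * P * F) * F := by simp only [mul_assoc, hF, mul_one]
      _ = 0 := by rw [hFPF, mul_sub, mul_one, hP.eq, sub_self, zero_mul]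
  have key : P * F ^ (j : ℕ) * F ^ (k : ℕ) * P = if j = k then P else 0 := by
    fin_cases j <;> fin_cases k <;> simp [hP.eq, hPFP, mul_assoc P F F, hF]
  calc finTwoUnits P F i j * finTwoUnits P F k l
      = F ^ (i : ℕ) * (P * F ^ (j : ℕ) * F ^ (k : ℕ) * P) * F ^ (l : ℕ) := by
        simp only [finTwoUnits]; noncomm_ring
    _ = _ := by rw [key]; split_ifs <;> simp [finTwoUnits, mul_assoc]

lemma sum_finTwoUnits (hFPF : F * P * F = 1 - P) : ∑ i, finTwoUnits P F i i = 1 := by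
  simp [finTwoUnits, Fin.sum_univ_two, hFPF]

lemma Commute.finTwoUnits {x : A} (hP : Commute x P) (hF : Commute x F) (i j : Fin 2) :
    Commute x (finTwoUnits P F i j) :=
  ((hF.pow_right _).mul_right hP).mul_right (hF.pow_right _)

lemma commute_mul_of_anticomm {a b x : A} (ha : a * x = -(x * a)) (hb : b * x = -(x * b)) :
    Commute (a * b) x := by
  rw [Commute, SemiconjBy, mul_assoc, hb, mul_neg, ← mul_assoc, ha, neg_mul, neg_neg, mul_assoc]

lemma isIdempotentElem_half_smul_one_add [Algebra ℂ A] {e : A} (he : e * e = 1) :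
    IsIdempotentElem ((2⁻¹ : ℂ) • (1 + e)) := by
  simp only [IsIdempotentElem, smul_mul_smul, add_mul, mul_add, one_mul, mul_one, he]
  module

end FinTwoUnits

def IsIdempotentElem.prodAlgHom {R A : Type*} [CommRing R] [Ring A] [Algebra R A] {p : A}
    (hp : IsIdempotentElem p) : R × R →ₐ[R] A where
  toFun x := x.1 • p + x.2 • (1 - p)
  map_one' := by simp
  map_mul' x y := by
    simp only [Prod.fst_mul, Prod.snd_mul, add_mul, mul_add, smul_mul_smul, mul_sub, sub_mul,
      hp.eq, one_mul, mul_one, sub_self]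
    module
  map_zero' := by simp
  map_add' x y := by simp only [Prod.fst_add, Prod.snd_add, add_smul]; abel
  commutes' r := by simp [Algebra.algebraMap_eq_smul_one, ← smul_add]

lemma IsIdempotentElem.prodAlgHom_apply {R A : Type*} [CommRing R] [Ring A] [Algebra R A] {p : A}
    (hp : IsIdempotentElem p) (x : R × R) : hp.prodAlgHom x = x.1 • p + x.2 • (1 - p) := rfl

lemma CliffordAlgebra.commute_of_commute_ι {R M A : Type*} [CommRing R] [AddCommGroup M]
    [Module R M] {Q : QuadraticForm R M} [Ring A] [Algebra R A] (f : CliffordAlgebra Q →ₐ[R] A)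
    {x : A} (h : ∀ v, Commute (f (ι Q v)) x) (b : CliffordAlgebra Q) : Commute (f b) x := by
  induction b using CliffordAlgebra.induction with
  | algebraMap r => rw [AlgHom.commutes]; exact Algebra.commutes r x
  | ι v => exact h v
  | mul a b ha hb => rw [map_mul]; exact ha.mul_left hb
  | add a b ha hb => rw [map_add]; exact ha.add_left hb

def pauliX : Matrix (Fin 2) (Fin 2) ℂ := !![0, 1; 1, 0]
def pauliY : Matrix (Fin 2) (Fin 2) ℂ := !![0, -I; I, 0]
def pauliZ : Matrix (Fin 2) (Fin 2) ℂ := !![1, 0; 0, -1]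

def pauliMap : (Fin 2 → ℂ) →ₗ[ℂ] Matrix (Fin 2) (Fin 2) ℂ :=
  (LinearMap.proj 0).smulRight pauliZ + (LinearMap.proj 1).smulRight pauliX

abbrev sumSquares (n : ℕ) : QuadraticForm ℂ (Fin n → ℂ) := weightedSumSquares ℂ (1 : Fin n → ℂ)

lemma sumSquares_apply {n : ℕ} (z : Fin n → ℂ) : sumSquares n z = ∑ i, z i ^ 2 := by
  simp [_root_.sq]

lemma pauliMap_apply (w : Fin 2 → ℂ) : pauliMap w = w 0 • pauliZ + w 1 • pauliX := rfl

lemma pauliMap_mul_self (w : Fin 2 → ℂ) : pauliMap w * pauliMap w = sumSquares 2 w • 1 := by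
  rw [pauliMap_apply, sumSquares_apply, Fin.sum_univ_two]
  ext i j
  fin_cases i <;> fin_cases j <;> simp [pauliX, pauliZ] <;> ring

lemma pauliMap_mul_pauliY (w : Fin 2 → ℂ) : pauliMap w * pauliY = -(pauliY * pauliMap w) := by
  rw [pauliMap_apply]
  ext i j
  fin_cases i <;> fin_cases j <;> simp [pauliX, pauliY, pauliZ] <;> ring

lemma pauliY_mul_self : pauliY * pauliY = 1 := by
  ext i j
  fin_cases i <;> fin_cases j <;> simp [pauliY]

lemma pauliY_mul_pauliZ_mul_pauliX : pauliY * pauliZ * pauliX = I • 1 := by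
  ext i j
  fin_cases i <;> fin_cases j <;> simp [pauliX, pauliY, pauliZ]

lemma half_smul_one_add_pauliZ : (2⁻¹ : ℂ) • (1 + pauliZ) = single 0 0 1 := by
  ext i j
  fin_cases i <;> fin_cases j <;> norm_num [pauliZ]

lemma pauliX_pow_mul_single_mul_pauliX_pow (i j : Fin 2) :
    pauliX ^ (i : ℕ) * single 0 0 1 * pauliX ^ (j : ℕ) = single i j 1 := by
  fin_cases i <;> fin_cases j <;> ext k l <;> fin_cases k <;> fin_cases l <;>
    simp [pauliX, single, mul_apply, vecHead, vecTail]

def sumSquaresIsometryEquivProd (m : ℕ) :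
    (sumSquares (m + 2)).IsometryEquiv ((sumSquares m).prod (sumSquares 2)) where
  toLinearEquiv := (LinearEquiv.funCongrLeft ℂ ℂ finSumFinEquiv).trans
    (LinearEquiv.sumArrowLequivProdArrow _ _ ℂ ℂ)
  map_app' z := by simp [Fin.sum_univ_add]

namespace CliffordAlgebraProdSumSquaresTwo

variable {V : Type*} [AddCommGroup V] [Module ℂ V] (Q : QuadraticForm ℂ V)

local notation "Q₂" => Q.prod (sumSquares 2)
local notation "⌜" M "⌝" => AlgHom.mapMatrix (Algebra.ofId ℂ (CliffordAlgebra Q)) M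

def toMatrixLinear : V × (Fin 2 → ℂ) →ₗ[ℂ] Matrix (Fin 2) (Fin 2) (CliffordAlgebra Q) :=
  LinearMap.mulRight ℂ ⌜pauliY⌝ ∘ₗ (scalarAlgHom (Fin 2) ℂ).toLinearMap ∘ₗ ι Q ∘ₗ
      LinearMap.fst ℂ _ _
    + (Algebra.ofId ℂ (CliffordAlgebra Q)).mapMatrix.toLinearMap ∘ₗ pauliMap ∘ₗ LinearMap.snd ℂ _ _

lemma toMatrixLinear_apply (z : V × (Fin 2 → ℂ)) :
    toMatrixLinear Q z = scalar (Fin 2) (ι Q z.1) * ⌜pauliY⌝ + ⌜pauliMap z.2⌝ := rfl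

lemma toMatrixLinear_mul_self (z : V × (Fin 2 → ℂ)) :
    toMatrixLinear Q z * toMatrixLinear Q z = algebraMap ℂ _ (Q₂ z) := by
  set s := scalar (Fin 2) (ι Q z.1)
  have hs : ∀ M x, ⌜M⌝ * (s * x) = s * (⌜M⌝ * x) := fun M x => by
    rw [← mul_assoc, ← (scalar_commute_mapMatrix_ofId _ M).eq, mul_assoc]
  have hss : s * s = algebraMap ℂ _ (Q z.1) := by
    rw [← map_mul, ι_sq_scalar]
    rfl
  rw [toMatrixLinear_apply, QuadraticMap.prod_apply, map_add]
  calc (s * ⌜pauliY⌝ + ⌜pauliMap z.2⌝) * (s * ⌜pauliY⌝ + ⌜pauliMap z.2⌝)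
      = s * s * ⌜pauliY * pauliY⌝ + s * ⌜pauliMap z.2 * pauliY + pauliY * pauliMap z.2⌝
        + ⌜pauliMap z.2 * pauliMap z.2⌝ := by
        simp only [map_mul, map_add, mul_add, add_mul, mul_assoc, hs]
        abel
    _ = _ := by
        rw [pauliY_mul_self, pauliMap_mul_pauliY, neg_add_cancel, pauliMap_mul_self, hss]
        simp [Algebra.algebraMap_eq_smul_one]

def toMatrix : CliffordAlgebra Q₂ →ₐ[ℂ] Matrix (Fin 2) (Fin 2) (CliffordAlgebra Q) :=
  lift Q₂ ⟨toMatrixLinear Q, toMatrixLinear_mul_self Q⟩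

def U (v : V) : CliffordAlgebra Q₂ := ι Q₂ (v, 0)
def E : CliffordAlgebra Q₂ := ι Q₂ (0, Pi.single 0 1)
def F : CliffordAlgebra Q₂ := ι Q₂ (0, Pi.single 1 1)
def P : CliffordAlgebra Q₂ := (2⁻¹ : ℂ) • (1 + E Q)

variable {Q}

lemma ι_eq (z : V × (Fin 2 → ℂ)) : ι Q₂ z = U Q z.1 + z.2 0 • E Q + z.2 1 • F Q := by
  have hz : z = (z.1, 0) + z.2 0 • (0, Pi.single 0 1) + z.2 1 • (0, Pi.single 1 1) := by
    ext i
    · simp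
    · fin_cases i <;> simp
  conv_lhs => rw [hz]
  simp only [map_add, map_smul, U, E, F]

lemma E_mul_self : E Q * E Q = 1 := by
  simp [E, ι_sq_scalar]

lemma F_mul_self : F Q * F Q = 1 := by
  simp [F, ι_sq_scalar]

lemma F_mul_E : F Q * E Q = -(E Q * F Q) :=
  ι_mul_ι_comm_of_isOrtho (by simp [QuadraticMap.IsOrtho, Fin.sum_univ_two])

lemma E_mul_U (v : V) : E Q * U Q v = -(U Q v * E Q) :=
  ι_mul_ι_comm_of_isOrtho (by simp)

lemma F_mul_U (v : V) : F Q * U Q v = -(U Q v * F Q) :=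
  ι_mul_ι_comm_of_isOrtho (by simp)

lemma U_mul_E (v : V) : U Q v * E Q = -(E Q * U Q v) := by
  rw [E_mul_U, neg_neg]

lemma U_mul_F (v : V) : U Q v * F Q = -(F Q * U Q v) := by
  rw [F_mul_U, neg_neg]

lemma E_mul_F_mul_E : E Q * F Q * E Q = -(E Q * (E Q * F Q)) := by
  rw [mul_assoc, F_mul_E, mul_neg, ← mul_assoc]

lemma E_mul_F_mul_F : E Q * F Q * F Q = -(F Q * (E Q * F Q)) := by
  rw [mul_assoc, F_mul_self, mul_one, ← mul_assoc, F_mul_E, neg_mul, neg_neg, mul_assoc,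
    F_mul_self, mul_one]

lemma E_mul_F_mul_self : E Q * F Q * (E Q * F Q) = -1 := by
  rw [← mul_assoc, E_mul_F_mul_E, neg_mul, ← mul_assoc, E_mul_self, one_mul, F_mul_self]

lemma P_mul_F : P Q * F Q = (2⁻¹ : ℂ) • (F Q + E Q * F Q) := by
  rw [P, smul_mul_assoc, add_mul, one_mul]

lemma F_mul_P : F Q * P Q = (2⁻¹ : ℂ) • (F Q - E Q * F Q) := by
  rw [P, mul_smul_comm, mul_add, mul_one, F_mul_E, sub_eq_add_neg]

lemma F_mul_P_mul_F : F Q * P Q * F Q = 1 - P Q := by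
  rw [F_mul_P, smul_mul_assoc, sub_mul, F_mul_self, mul_assoc, F_mul_self, mul_one, P]
  module

variable (Q) in
def ofScalarLinear : V →ₗ[ℂ] CliffordAlgebra Q₂ :=
  -I • (LinearMap.mulRight ℂ (E Q * F Q) ∘ₗ ι Q₂ ∘ₗ LinearMap.inl ℂ V _)

lemma ofScalarLinear_apply (v : V) : ofScalarLinear Q v = -I • (U Q v * (E Q * F Q)) := rfl

lemma ofScalarLinear_mul_self (v : V) :
    ofScalarLinear Q v * ofScalarLinear Q v = algebraMap ℂ _ (Q v) := by
  have hU : U Q v * U Q v = algebraMap ℂ _ (Q v) := by simp [U, ι_sq_scalar]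
  rw [ofScalarLinear_apply, smul_mul_smul,
    (commute_mul_of_anticomm (E_mul_U v) (F_mul_U v)).mul_mul_mul_comm, hU, E_mul_F_mul_self]
  simp

variable (Q) in
def ofScalar : CliffordAlgebra Q →ₐ[ℂ] CliffordAlgebra Q₂ :=
  lift Q ⟨ofScalarLinear Q, ofScalarLinear_mul_self⟩

lemma commute_ofScalar_E (b : CliffordAlgebra Q) : Commute (ofScalar Q b) (E Q) := by
  refine commute_of_commute_ι (ofScalar Q) (fun v => ?_) b
  rw [ofScalar, lift_ι_apply, ofScalarLinear_apply]
  exact (commute_mul_of_anticomm (U_mul_E v) E_mul_F_mul_E).smul_left (-I)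

lemma commute_ofScalar_F (b : CliffordAlgebra Q) : Commute (ofScalar Q b) (F Q) := by
  refine commute_of_commute_ι (ofScalar Q) (fun v => ?_) b
  rw [ofScalar, lift_ι_apply, ofScalarLinear_apply]
  exact (commute_mul_of_anticomm (U_mul_F v) E_mul_F_mul_F).smul_left (-I)

lemma commute_ofScalar_P (b : CliffordAlgebra Q) : Commute (ofScalar Q b) (P Q) :=
  ((Commute.one_right _).add_right (commute_ofScalar_E b)).smul_right _

variable (Q) in
def ofMatrix : Matrix (Fin 2) (Fin 2) (CliffordAlgebra Q) →ₐ[ℂ] CliffordAlgebra Q₂ :=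
  liftOfMatrixUnits (ofScalar Q) (finTwoUnits (P Q) (F Q))
    (finTwoUnits_mul (isIdempotentElem_half_smul_one_add E_mul_self) F_mul_self F_mul_P_mul_F)
    (sum_finTwoUnits F_mul_P_mul_F)
    fun b => (commute_ofScalar_P b).finTwoUnits (commute_ofScalar_F b)

lemma toMatrix_ι (z : V × (Fin 2 → ℂ)) : toMatrix Q (ι Q₂ z) = toMatrixLinear Q z :=
  lift_ι_apply _ _ _

lemma toMatrix_E : toMatrix Q (E Q) = ⌜pauliZ⌝ := by
  simp [E, toMatrix_ι, toMatrixLinear_apply, pauliMap_apply]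

lemma toMatrix_F : toMatrix Q (F Q) = ⌜pauliX⌝ := by
  simp [F, toMatrix_ι, toMatrixLinear_apply, pauliMap_apply]

lemma toMatrix_U (v : V) : toMatrix Q (U Q v) = scalar (Fin 2) (ι Q v) * ⌜pauliY⌝ := by
  simp [U, toMatrix_ι, toMatrixLinear_apply, pauliMap_apply]

lemma toMatrix_P : toMatrix Q (P Q) = ⌜single 0 0 1⌝ := by
  rw [P, map_smul, map_add, map_one, toMatrix_E, ← half_smul_one_add_pauliZ, map_smul, map_add,
    map_one]

lemma toMatrix_finTwoUnits (i j : Fin 2) :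
    toMatrix Q (finTwoUnits (P Q) (F Q) i j) = ⌜single i j 1⌝ := by
  rw [finTwoUnits, map_mul, map_mul, map_pow, map_pow, toMatrix_F, toMatrix_P, ← map_pow,
    ← map_pow, ← map_mul, ← map_mul, pauliX_pow_mul_single_mul_pauliX_pow]

lemma toMatrix_comp_ofScalar : (toMatrix Q).comp (ofScalar Q) = scalarAlgHom (Fin 2) ℂ := by
  refine hom_ext (LinearMap.ext fun v => ?_)
  simp only [LinearMap.comp_apply, AlgHom.toLinearMap_apply, AlgHom.comp_apply, ofScalar,
    lift_ι_apply, ofScalarLinear_apply]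
  rw [map_smul, map_mul, map_mul, toMatrix_U, toMatrix_E, toMatrix_F, mul_assoc, ← map_mul,
    ← map_mul, ← mul_assoc, pauliY_mul_pauliZ_mul_pauliX, map_smul, map_one, mul_smul_comm, mul_one,
    smul_smul]
  simp

lemma toMatrix_ofMatrix (M : Matrix (Fin 2) (Fin 2) (CliffordAlgebra Q)) :
    toMatrix Q (ofMatrix Q M) = M := by
  have h := AlgHom.congr_fun (toMatrix_comp_ofScalar (Q := Q))
  simp only [AlgHom.comp_apply, scalarAlgHom_apply] at h
  rw [ofMatrix, liftOfMatrixUnits_apply]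
  simp only [map_sum, map_mul, h, toMatrix_finTwoUnits, scalar_mul_mapMatrix_ofId_single]
  exact (matrix_eq_sum_single M).symm

lemma ofMatrix_scalar (b : CliffordAlgebra Q) : ofMatrix Q (scalar (Fin 2) b) = ofScalar Q b :=
  liftOfMatrixUnits_scalar ..

lemma ofMatrix_mapMatrix_ofId (M : Matrix (Fin 2) (Fin 2) ℂ) :
    ofMatrix Q ⌜M⌝ = M 0 0 • P Q + M 0 1 • (P Q * F Q) + M 1 0 • (F Q * P Q) + M 1 1 • (1 - P Q) := by
  rw [ofMatrix, liftOfMatrixUnits_mapMatrix_ofId]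
  simp [Fin.sum_univ_two, finTwoUnits, F_mul_P_mul_F, add_assoc]

lemma ofMatrix_pauliZ : ofMatrix Q ⌜pauliZ⌝ = E Q := by
  rw [ofMatrix_mapMatrix_ofId]
  show (1 : ℂ) • P Q + (0 : ℂ) • _ + (0 : ℂ) • _ + (-1 : ℂ) • (1 - P Q) = E Q
  rw [P]
  module

lemma ofMatrix_pauliX : ofMatrix Q ⌜pauliX⌝ = F Q := by
  rw [ofMatrix_mapMatrix_ofId]
  show (0 : ℂ) • P Q + (1 : ℂ) • (P Q * F Q) + (1 : ℂ) • (F Q * P Q) + (0 : ℂ) • _ = F Q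
  rw [P_mul_F, F_mul_P]
  module

lemma ofMatrix_pauliY : ofMatrix Q ⌜pauliY⌝ = -I • (E Q * F Q) := by
  rw [ofMatrix_mapMatrix_ofId]
  show (0 : ℂ) • P Q + (-I) • (P Q * F Q) + I • (F Q * P Q) + (0 : ℂ) • _ = -I • (E Q * F Q)
  rw [P_mul_F, F_mul_P]
  module

lemma ofMatrix_toMatrix (x : CliffordAlgebra Q₂) : ofMatrix Q (toMatrix Q x) = x := by
  suffices (ofMatrix Q).comp (toMatrix Q) = AlgHom.id ℂ _ from AlgHom.congr_fun this x
  refine hom_ext (LinearMap.ext fun z => ?_)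
  simp only [LinearMap.comp_apply, AlgHom.toLinearMap_apply, AlgHom.comp_apply, AlgHom.id_apply,
    toMatrix_ι, toMatrixLinear_apply, pauliMap_apply, map_add, map_mul, map_smul, ofMatrix_scalar,
    ofMatrix_pauliX, ofMatrix_pauliY, ofMatrix_pauliZ]
  rw [ofScalar, lift_ι_apply, ofScalarLinear_apply, smul_mul_smul, mul_assoc, E_mul_F_mul_self,
    ι_eq]
  simp [add_assoc]

variable (Q) in
def equiv : CliffordAlgebra Q₂ ≃ₐ[ℂ] Matrix (Fin 2) (Fin 2) (CliffordAlgebra Q) :=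
  AlgEquiv.ofAlgHom (toMatrix Q) (ofMatrix Q) (AlgHom.ext toMatrix_ofMatrix)
    (AlgHom.ext ofMatrix_toMatrix)

end CliffordAlgebraProdSumSquaresTwo

namespace CliffordAlgebraSumSquaresOne

def e : CliffordAlgebra (sumSquares 1) := ι _ (Pi.single 0 1)

lemma e_mul_self : e * e = 1 := by
  simp [e, ι_sq_scalar]

lemma ι_eq (v : Fin 1 → ℂ) : ι _ v = v 0 • e := by
  rw [e, ← map_smul]
  congr 1
  ext i
  fin_cases i
  simp

def toProd : CliffordAlgebra (sumSquares 1) →ₐ[ℂ] ℂ × ℂ :=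
  lift _ ⟨(LinearMap.proj 0).prod (-LinearMap.proj 0), fun v => by simp⟩

lemma toProd_ι (v : Fin 1 → ℂ) : toProd (ι _ v) = (v 0, -v 0) :=
  lift_ι_apply _ _ _

lemma toProd_e : toProd e = (1, -1) := by
  simp [e, toProd_ι]

def ofProd : ℂ × ℂ →ₐ[ℂ] CliffordAlgebra (sumSquares 1) :=
  (isIdempotentElem_half_smul_one_add e_mul_self).prodAlgHom

lemma toProd_half_smul_one_add_e : toProd ((2⁻¹ : ℂ) • (1 + e)) = (1, 0) := by
  rw [map_smul, map_add, map_one, toProd_e]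
  norm_num [Prod.ext_iff]

lemma toProd_ofProd (x : ℂ × ℂ) : toProd (ofProd x) = x := by
  rw [ofProd, IsIdempotentElem.prodAlgHom_apply, map_add, map_smul toProd x.1, map_smul toProd x.2,
    map_sub, map_one, toProd_half_smul_one_add_e]
  ext <;> simp

lemma ofProd_toProd (x : CliffordAlgebra (sumSquares 1)) : ofProd (toProd x) = x := by
  suffices ofProd.comp toProd = AlgHom.id ℂ _ from AlgHom.congr_fun this x
  refine hom_ext (LinearMap.ext fun v => ?_)
  rw [LinearMap.comp_apply, LinearMap.comp_apply, AlgHom.toLinearMap_apply,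
    AlgHom.toLinearMap_apply, AlgHom.comp_apply, AlgHom.id_apply, toProd_ι, ofProd,
    IsIdempotentElem.prodAlgHom_apply, ι_eq v]
  module

def equiv : CliffordAlgebra (sumSquares 1) ≃ₐ[ℂ] ℂ × ℂ :=
  AlgEquiv.ofAlgHom toProd ofProd (AlgHom.ext toProd_ofProd) (AlgHom.ext ofProd_toProd)

end CliffordAlgebraSumSquaresOne

def cliffordSumSquaresOddEquiv : (n : ℕ) →
    CliffordAlgebra (sumSquares (2 * n + 1)) ≃ₐ[ℂ]
      Matrix (Fin (2 ^ n)) (Fin (2 ^ n)) (CliffordAlgebra (sumSquares 1))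
  -- not `Matrix.uniqueAlgEquiv`, whose `Fintype (Fin 1)` instance differs from `Fin.fintype 1`
  | 0 => AlgEquiv.ofBijective (scalarAlgHom (Fin 1) ℂ)
      ⟨fun a b h => by simpa using congr_fun₂ h 0 0,
        fun M => ⟨M 0 0, by ext i j; fin_cases i; fin_cases j; rfl⟩⟩
  | n + 1 => (equivOfIsometry (sumSquaresIsometryEquivProd (2 * n + 1))).trans <|
      (CliffordAlgebraProdSumSquaresTwo.equiv _).trans <|
        (cliffordSumSquaresOddEquiv n).mapMatrix.trans <| (compAlgEquiv _ _ _ ℂ).trans <|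
          reindexAlgEquiv ℂ _ (finProdFinEquiv.trans (finCongr (pow_succ' 2 n).symm))

/-- The complex Clifford algebra of the standard quadratic form
`Q(z) = ∑ zᵢ²` on `ℂ^{2n+1}` is isomorphic as a `ℂ`-algebra to
`M_{2ⁿ}(ℂ) ⊕ M_{2ⁿ}(ℂ)`. -/
theorem stmt17 (n : ℕ) (Q : QuadraticForm ℂ (Fin (2 * n + 1) → ℂ))
    (hQ : ∀ z : Fin (2 * n + 1) → ℂ, Q z = ∑ i, z i ^ 2) :
    Nonempty (CliffordAlgebra Q ≃ₐ[ℂ]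
      (Matrix (Fin (2 ^ n)) (Fin (2 ^ n)) ℂ × Matrix (Fin (2 ^ n)) (Fin (2 ^ n)) ℂ)) := by
  obtain rfl : Q = sumSquares (2 * n + 1) :=
    QuadraticMap.ext fun z => by rw [hQ, sumSquares_apply]
  exact ⟨(cliffordSumSquaresOddEquiv n).trans
    (CliffordAlgebraSumSquaresOne.equiv.mapMatrix.trans prodAlgEquiv)⟩
end
end

section
/- Let n ≥ 1 and let p, q ∈ M_n(ℂ) be projections, i.e., p = p* = p² and q = q* = q². Then p and q are homotopic through projections — there exists a continuous path γ : [0,1] → M_n(ℂ) with γ(0) = p, γ(1) = q, and γ(t) = γ(t)* = γ(t)² for all t — if and only if rank(p) = rank(q). -/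
/-!
Along a path of projections the trace equals the rank, so the rank is a continuous integer-valued
function on `[0, 1]` and hence constant. Conversely, projections of equal rank have the same
characteristic polynomial `(X - 1) ^ r * X ^ (n - r)`, so the spectral theorem makes them
unitarily conjugate, `q = u p u*`. Rotating `u` by a suitable scalar of modulus one (which does not
change `u p u*`) moves `-1` out of its finite spectrum; then `‖u - 1‖ < 2`, so `u` is joined to `1`
by a path of unitaries `u_t`, and `u_t p u_t*` is a path of projections from `p` to `q`.
-/

open unitInterval Polynomial

namespace Matrix

variable {n : Type*} [Fintype n] [DecidableEq n]

theorem trace_eq_rank_of_isIdempotentElem {K : Type*} [Field K] {p : Matrix n n K}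
    (hp : IsIdempotentElem p) : p.trace = p.rank := by
  rw [← trace_toLin'_eq]
  exact (LinearMap.IsIdempotentElem.isProj_range _ (hp.map toLinAlgEquiv')).trace

variable {𝕜 : Type*} [RCLike 𝕜]

theorem continuous_rank_of_isIdempotentElem {X : Type*} [TopologicalSpace X]
    {γ : X → Matrix n n 𝕜} (hγ : Continuous γ) (hidem : ∀ x, IsIdempotentElem (γ x)) :
    Continuous fun x ↦ (γ x).rank := by
  rw [Nat.isClosedEmbedding_coe_real.continuous_iff]
  convert RCLike.continuous_re.comp hγ.matrix_trace using 1
  ext x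
  simp [trace_eq_rank_of_isIdempotentElem (hidem x)]

theorem IsHermitian.charpoly_eq_of_isIdempotentElem {A : Matrix n n 𝕜} (hA : A.IsHermitian)
    (hA' : IsIdempotentElem A) :
    A.charpoly = (X - 1) ^ A.rank * X ^ (Fintype.card n - A.rank) := by
  have h01 (i : n) : hA.eigenvalues i = 0 ∨ hA.eigenvalues i = 1 :=
    hA'.spectrum_subset ℝ (hA.eigenvalues_mem_spectrum_real i)
  have hfactor (i : n) :
      X - C (hA.eigenvalues i : 𝕜) = if hA.eigenvalues i ≠ 0 then X - 1 else X := by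
    rcases h01 i with h | h <;> simp [h]
  rw [hA.charpoly_eq, Finset.prod_congr rfl fun i _ ↦ hfactor i, Finset.prod_ite,
    Finset.prod_const, Finset.prod_const, hA.rank_eq_card_non_zero_eigs,
    ← Fintype.card_subtype_compl, Fintype.card_subtype, Fintype.card_subtype]

theorem IsHermitian.exists_unitary_conj_eq_of_charpoly_eq {A B : Matrix n n 𝕜}
    (hA : A.IsHermitian) (hB : B.IsHermitian) (h : A.charpoly = B.charpoly) :
    ∃ u ∈ unitary (Matrix n n 𝕜), B = u * A * star u := by
  have heig := (hA.eigenvalues_eq_eigenvalues_iff hB).mpr h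
  refine ⟨_, (hB.eigenvectorUnitary * star hA.eigenvectorUnitary).2, ?_⟩
  rw [← Unitary.conjStarAlgAut_apply (S := 𝕜), Unitary.conjStarAlgAut_mul_apply,
    hA.conjStarAlgAut_star_eigenvectorUnitary, heig]
  exact hB.spectral_theorem

end Matrix

theorem Circle.coe_mem_unitary (z : Circle) : (z : ℂ) ∈ unitary ℂ := by
  simp [Unitary.mem_iff, Complex.conj_mul', Complex.mul_conj', Circle.norm_coe]

section CStarAlgebra

variable {A : Type*} [CStarAlgebra A]

theorem Unitary.exists_circle_norm_smul_sub_one_lt_two {u : A} (hu : u ∈ unitary A)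
    (hσ : (spectrum ℂ u).Finite) : ∃ z : Circle, ‖(z : ℂ) • u - 1‖ < 2 := by
  nontriviality A
  have hinf : (Circle.exp '' Set.Ico 0 1).Infinite :=
    (Set.Ico_infinite one_pos).image (Circle.exp_injOn_Ico (by linarith [Real.pi_gt_three]))
  obtain ⟨w, -, hw⟩ :=
    (hinf.sdiff (hσ.preimage (f := ((↑) : Circle → ℂ)) Circle.coe_injective.injOn)).nonempty
  -- `w` is a point of the circle outside the spectrum, and `-w⁻¹ • u` has `-1` in its spectrum
  -- exactly when `w` is in that of `u`.
  refine ⟨-w⁻¹, (norm_sub_one_lt_two_iff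
    (Unitary.smul_mem_of_mem (-w⁻¹).coe_mem_unitary hu)).mpr ?_⟩
  rw [spectrum.smul_eq_smul _ _ (spectrum.nonempty u)]
  rintro ⟨s, hs, hsw⟩
  have hsw' : s = w := by
    have := Circle.coe_ne_zero w
    simp only [Circle.coe_neg, Circle.coe_inv, smul_eq_mul] at hsw
    field_simp at hsw
    linear_combination -hsw
  exact hw (show (w : ℂ) ∈ spectrum ℂ u from hsw' ▸ hs)

theorem IsStarProjection.exists_path_unitary_conj_of_norm_sub_one_lt_two {p u : A}
    (hp : IsStarProjection p) (hu : u ∈ unitary A) (hu2 : ‖u - 1‖ < 2) :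
    ∃ γ : I → A, Continuous γ ∧ γ 0 = p ∧ γ 1 = u * p * star u ∧
      ∀ t, IsStarProjection (γ t) := by
  let v := Unitary.path 1 ⟨u, hu⟩ (by simpa using hu2)
  refine ⟨fun t ↦ Unitary.conjStarAlgAut ℂ A (v t) p, ?_, by simp, by simp, fun t ↦ hp.map _⟩
  simp only [Unitary.conjStarAlgAut_apply]
  fun_prop

theorem IsStarProjection.exists_path_unitary_conj {p u : A} (hp : IsStarProjection p)
    (hu : u ∈ unitary A) (hσ : (spectrum ℂ u).Finite) :
    ∃ γ : I → A, Continuous γ ∧ γ 0 = p ∧ γ 1 = u * p * star u ∧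
      ∀ t, IsStarProjection (γ t) := by
  obtain ⟨z, hz⟩ := Unitary.exists_circle_norm_smul_sub_one_lt_two hu hσ
  obtain ⟨γ, hγ, h0, h1, hγp⟩ := hp.exists_path_unitary_conj_of_norm_sub_one_lt_two
    (Unitary.smul_mem_of_mem z.coe_mem_unitary hu) hz
  refine ⟨γ, hγ, h0, ?_, hγp⟩
  rw [h1, star_smul, smul_mul_assoc, smul_mul_assoc, mul_smul_comm, smul_smul,
    Unitary.mul_star_self_of_mem z.coe_mem_unitary, one_smul]

end CStarAlgebra

-- The `L²` operator norm makes `Mₙ(ℂ)` a C⋆-algebra and induces its usual topology.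
open scoped Matrix.Norms.L2Operator in
theorem stmt19_general {n : ℕ} (p q : Matrix (Fin n) (Fin n) ℂ)
    (hp : star p = p ∧ p * p = p) (hq : star q = q ∧ q * q = q) :
    (∃ γ : unitInterval → Matrix (Fin n) (Fin n) ℂ, Continuous γ ∧
        γ 0 = p ∧ γ 1 = q ∧ ∀ t, star (γ t) = γ t ∧ γ t * γ t = γ t) ↔
      p.rank = q.rank := by
  have hpH : p.IsHermitian := hp.1
  have hqH : q.IsHermitian := hq.1
  constructor
  · rintro ⟨γ, hγ, rfl, rfl, hproj⟩
    exact PreconnectedSpace.constant inferInstance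
      (Matrix.continuous_rank_of_isIdempotentElem hγ fun t ↦ (hproj t).2)
  · intro hrank
    obtain ⟨u, hu, rfl⟩ := hpH.exists_unitary_conj_eq_of_charpoly_eq hqH (by
      rw [hpH.charpoly_eq_of_isIdempotentElem hp.2, hqH.charpoly_eq_of_isIdempotentElem hq.2,
        hrank])
    obtain ⟨γ, hγ, h0, h1, hγp⟩ :=
      IsStarProjection.exists_path_unitary_conj ⟨hp.2, hp.1⟩ hu u.finite_spectrum
    exact ⟨γ, hγ, h0, h1, fun t ↦ ⟨(hγp t).2, (hγp t).1⟩⟩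

/-- Two projections `p, q ∈ Mₙ(ℂ)` are homotopic through projections
(there is a continuous path of projections from `p` to `q`) if and only if they have
the same rank. -/
theorem stmt19 {n : ℕ} (hn : 1 ≤ n) (p q : Matrix (Fin n) (Fin n) ℂ)
    (hp : star p = p ∧ p * p = p) (hq : star q = q ∧ q * q = q) :
    (∃ γ : unitInterval → Matrix (Fin n) (Fin n) ℂ, Continuous γ ∧
        γ 0 = p ∧ γ 1 = q ∧ ∀ t, star (γ t) = γ t ∧ γ t * γ t = γ t) ↔
      p.rank = q.rank :=
  stmt19_general p q hp hq
end
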